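/- arXiv:2001.07642 — 7 statements merged into one kernel-verified Lean document; each statement's English description precedes it below -/
import Mathlib

section
/- Let H be a set of bipartite graphs over the vertices of K_{n,m}, and let f_H be the graph cover function of H. Then in the unique real multilinear polynomial representing f_H, every monomial with nonzero coefficient corresponds to an H-covered graph; explicitly, the coefficient of the monomial of a graph G equals Σ over nonempty S ⊆ H with ∪_{H∈S}E(H) = E(G) of (−1)^{|S|+1}. -/
/-!
Let `T` be the set of edges present in `x`. Grouping the monomials by the subfamily `S` whose
union is `G`, the polynomial evaluated at `x` becomes `∑_{∅ ≠ S ⊆ 𝓗} (-1)^{|S|+1} [⋃S ⊆ T]`,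
and `⋃S ⊆ T` holds exactly when `S ⊆ 𝓗_T := {H ∈ 𝓗 | H ⊆ T}`. The alternating sum over the
nonempty subfamilies of `𝓗_T` is `1` if `𝓗_T ≠ ∅` and `0` otherwise, which is `f_𝓗(x)`.
-/

open Finset
open scoped Classical

/-- A graph (edge set) `G` is `𝓗`-covered if it is the union of a nonempty subfamily of `𝓗`. -/
def covered {α : Type*} [DecidableEq α] (𝓗 : Finset (Finset α)) (G : Finset α) : Prop :=
  ∃ S ⊆ 𝓗, S.Nonempty ∧ S.sup id = G

section

variable {α R : Type*} [DecidableEq α] [CommRing R]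

theorem sum_powerset_nonempty_neg_one_pow_card_succ (T : Finset α) :
    ∑ S ∈ T.powerset with S.Nonempty, (-1 : R) ^ (#S + 1) = if T.Nonempty then 1 else 0 := by
  have hall : ∑ S ∈ T.powerset, (-1 : R) ^ #S = if T = ∅ then 1 else 0 := by
    simpa [apply_ite] using congrArg (Int.cast : ℤ → R) (sum_powerset_neg_one_pow_card (x := T))
  simp_rw [nonempty_iff_ne_empty, filter_ne', sum_erase_eq_sub (empty_mem_powerset T), pow_succ,
    ← sum_mul, hall]
  split_ifs <;> simp_all

theorem sum_sum_filter_sup_eq_mul [Fintype α] (𝓗 : Finset (Finset α)) (f : Finset α → R) :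
    ∑ G, (∑ S ∈ 𝓗.powerset with S.Nonempty ∧ S.sup id = G, (-1 : R) ^ (#S + 1)) * f G
      = ∑ S ∈ 𝓗.powerset with S.Nonempty, (-1 : R) ^ (#S + 1) * f (S.sup id) := by
  rw [← sum_fiberwise _ (fun S : Finset (Finset α) => S.sup id)]
  refine sum_congr rfl fun G _ => ?_
  rw [sum_mul, filter_filter]
  exact sum_congr rfl fun S hS => by rw [(mem_filter.1 hS).2.2]

theorem sum_powerset_nonempty_neg_one_pow_mul_sup_subset (𝓗 : Finset (Finset α))
    (T : Finset α) :
    ∑ S ∈ 𝓗.powerset with S.Nonempty, (-1 : R) ^ (#S + 1) * (if S.sup id ⊆ T then 1 else 0)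
      = if ∃ H ∈ 𝓗, H ⊆ T then 1 else 0 := by
  have hpowerset : {S ∈ 𝓗.powerset | S.sup id ⊆ T} = {H ∈ 𝓗 | H ⊆ T}.powerset := by
    ext S
    simp only [mem_filter, mem_powerset, Finset.sup_le_iff, id, subset_iff, imp_and, forall_and]
  simp_rw [mul_boole, ← sum_filter, filter_comm, hpowerset,
    sum_powerset_nonempty_neg_one_pow_card_succ, filter_nonempty_iff]

end

/-- the real multilinear polynomial of the graph cover function `f_𝓗` has its
monomials supported on `𝓗`-covered graphs, with the coefficient of the monomial of `G` equal
to `∑_{∅ ≠ S ⊆ 𝓗, ∪S = G} (−1)^{|S|+1}`. -/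
theorem stmt2 (n m : ℕ) (𝓗 : Finset (Finset (Fin n × Fin m))) :
    -- the explicit coefficients represent the graph cover function f_𝓗
    (∀ x : Fin n × Fin m → Bool,
      (∑ G : Finset (Fin n × Fin m),
        (∑ S ∈ 𝓗.powerset.filter (fun S => S.Nonempty ∧ S.sup id = G),
          (-1 : ℝ) ^ (S.card + 1)) * ∏ e ∈ G, (if x e then (1 : ℝ) else 0))
        = (if ∃ H ∈ 𝓗, ∀ e ∈ H, x e = true then 1 else 0)) ∧
    -- every monomial with nonzero coefficient corresponds to an 𝓗-covered graph
    (∀ G : Finset (Fin n × Fin m),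
      (∑ S ∈ 𝓗.powerset.filter (fun S => S.Nonempty ∧ S.sup id = G),
        (-1 : ℝ) ^ (S.card + 1)) ≠ 0 → covered 𝓗 G) := by
  constructor
  · intro x
    have hpresent : ∀ G : Finset (Fin n × Fin m),
        (∀ e ∈ G, x e = true) ↔ G ⊆ ({e | x e} : Finset _) := by
      simp [subset_iff]
    simp_rw [prod_boole, hpresent, sum_sum_filter_sup_eq_mul,
      sum_powerset_nonempty_neg_one_pow_mul_sup_subset]
  · intro G hG
    obtain ⟨S, hS, -⟩ := exists_ne_zero_of_sum_ne_zero hG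
    rw [mem_filter, mem_powerset] at hS
    exact ⟨S, hS.1, hS.2⟩
end

section
/- Let H be a set of bipartite graphs over the vertices of K_{n,m} and let P be the lattice consisting of all H-covered graphs together with the empty graph 0̂, ordered by inclusion. Then f_H(x) = Σ_{G H-covered} (−μ_P(0̂, G)) · Π_{(i,j)∈E(G)} x_{i,j}; that is, the coefficients of the multilinear polynomial representing f_H are the negated Möbius numbers of P. -/
/-!
Evaluated at the indicator of an edge set `T`, the polynomial sums `-μ_P(0̂, G)` over the
`𝓗`-covered `G ⊆ T`. These are exactly the covered subgraphs of the union `U` of all members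
of `𝓗` contained in `T`. If some member of `𝓗` lies in `T`, then `U` is itself covered and the
Möbius recursion at `U` makes the sum equal to `μ_P(0̂, 0̂) = 1`; otherwise no covered graph lies
in `T` and the sum is empty.
-/

open Finset
open scoped Classical

namespace covered

variable {α : Type*} [DecidableEq α] {𝓗 : Finset (Finset α)} {G T : Finset α}

/-- The largest `𝓗`-covered subset of `T`, provided some member of `𝓗` lies in `T`. -/
def part (𝓗 : Finset (Finset α)) (T : Finset α) : Finset α :=
  (𝓗.filter (· ⊆ T)).sup id

lemma part_subset : part 𝓗 T ⊆ T :=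
  Finset.sup_le fun _ hH => (mem_filter.1 hH).2

lemma covered_part {H : Finset α} (hH : H ∈ 𝓗) (hHT : H ⊆ T) : covered 𝓗 (part 𝓗 T) :=
  ⟨_, filter_subset _ _, ⟨H, mem_filter.2 ⟨hH, hHT⟩⟩, rfl⟩

lemma exists_subset (hG : covered 𝓗 G) : ∃ H ∈ 𝓗, H ⊆ G := by
  obtain ⟨S, hS𝓗, ⟨H, hH⟩, rfl⟩ := hG
  exact ⟨H, hS𝓗 hH, le_sup (f := id) hH⟩

lemma subset_part_iff (hG : covered 𝓗 G) : G ⊆ part 𝓗 T ↔ G ⊆ T := by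
  refine ⟨fun h => h.trans part_subset, fun hGT => ?_⟩
  obtain ⟨S, hS𝓗, -, rfl⟩ := hG
  refine Finset.sup_le fun H hH => ?_
  exact le_sup (f := id) (mem_filter.2 ⟨hS𝓗 hH, (le_sup (f := id) hH).trans hGT⟩)

lemma filter_powerset_part (𝓗 : Finset (Finset α)) (T : Finset α) :
    (part 𝓗 T).powerset.filter (covered 𝓗) = T.powerset.filter (covered 𝓗) := by
  ext G
  simp only [mem_filter, mem_powerset]
  exact ⟨fun ⟨h, hG⟩ => ⟨(subset_part_iff hG).1 h, hG⟩,
    fun ⟨h, hG⟩ => ⟨(subset_part_iff hG).2 h, hG⟩⟩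

lemma filter_powerset_eq_empty (h : ¬∃ H ∈ 𝓗, H ⊆ T) :
    T.powerset.filter (covered 𝓗) = ∅ :=
  filter_eq_empty_iff.2 fun G hGT hG => by
    obtain ⟨H, hH, hHG⟩ := exists_subset hG
    exact h ⟨H, hH, hHG.trans (mem_powerset.1 hGT)⟩

end covered

open covered in
/-- With `μ0 G` read as `μ_P(0̂, G)` and `0̂` as `∅`, `hrec` is the recursion defining `μ_P`. -/
theorem sum_filter_powerset_covered {α : Type*} [DecidableEq α] (𝓗 : Finset (Finset α))
    (μ0 : Finset α → ℝ) (hbot : μ0 ∅ = 1)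
    (hrec : ∀ G : Finset α, covered 𝓗 G →
      μ0 ∅ + ∑ G' ∈ G.powerset.filter (covered 𝓗), μ0 G' = 0) (T : Finset α) :
    ∑ G ∈ T.powerset.filter (covered 𝓗), -μ0 G = if ∃ H ∈ 𝓗, H ⊆ T then 1 else 0 := by
  split_ifs with h
  · obtain ⟨H, hH, hHT⟩ := h
    have := hrec _ (covered_part hH hHT)
    rw [filter_powerset_part, hbot] at this
    rw [sum_neg_distrib]
    linarith
  · rw [filter_powerset_eq_empty h, sum_empty]

lemma sum_mul_prod_indicator {α : Type*} [Fintype α] (c : Finset α → ℝ) (x : α → Bool) :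
    ∑ G : Finset α, c G * ∏ e ∈ G, (if x e then (1 : ℝ) else 0)
      = ∑ G ∈ (univ.filter fun e => x e).powerset, c G := by
  simp only [prod_boole, mul_ite, mul_one, mul_zero]
  rw [← sum_filter]
  congr 1
  ext G
  simp [subset_iff]

/-- if `μ0` is the Möbius number function of the lattice `P` of `𝓗`-covered
graphs together with the empty graph `0̂` (characterized by `μ0 0̂ = 1` and, for every
`𝓗`-covered `G`, `∑_{0̂ ≤ G' ≤ G} μ0 G' = 0`), then the graph cover function `f_𝓗` is
represented by the multilinear polynomial whose coefficient on each `𝓗`-covered `G` is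
`−μ0 G` (and `0` on non-covered graphs). -/
theorem stmt3 (n m : ℕ) (𝓗 : Finset (Finset (Fin n × Fin m)))
    (μ0 : Finset (Fin n × Fin m) → ℝ)
    (hbot : μ0 ∅ = 1)
    (hrec : ∀ G : Finset (Fin n × Fin m), covered 𝓗 G →
      μ0 ∅ + ∑ G' ∈ G.powerset.filter (covered 𝓗), μ0 G' = 0) :
    ∀ x : Fin n × Fin m → Bool,
      (∑ G : Finset (Fin n × Fin m),
        (if covered 𝓗 G then -μ0 G else 0) * ∏ e ∈ G, (if x e then (1 : ℝ) else 0))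
        = (if ∃ H ∈ 𝓗, ∀ e ∈ H, x e = true then 1 else 0) := by
  intro x
  rw [sum_mul_prod_indicator, ← sum_filter, sum_filter_powerset_covered 𝓗 μ0 hbot hrec]
  simp [subset_iff]
end

section
/- For n > 1, the number of elementary (connected matching-covered) balanced bipartite graphs on vertex classes of size n each is at least 2^{n²}·(1 − 2n⁴/2ⁿ). In particular, the proportion of subgraphs of K_{n,n} that are matching-covered tends to 1 as n → ∞. -/
open Finset
open scoped Classical

/-- Edges of the complete bipartite graph `K_{n,n}` on labeled parts of size `n`. -/
abbrev Edge (n : ℕ) := Fin n × Fin n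

/-- `M` is (the edge set of) a perfect matching of `K_{n,n}`. -/
def isPM {n : ℕ} (M : Finset (Edge n)) : Prop :=
  ∃ σ : Equiv.Perm (Fin n), M = Finset.univ.image fun i => (i, σ i)

/-- `G` is matching-covered: its edge set is a (nonempty) union of perfect matchings. -/
def matchingCovered {n : ℕ} (G : Finset (Edge n)) : Prop :=
  ∃ S : Finset (Finset (Edge n)), S.Nonempty ∧ (∀ M ∈ S, isPM M) ∧ S.sup id = G

/-- `G` contains a perfect matching. -/
def hasPM {n : ℕ} (G : Finset (Edge n)) : Prop :=
  ∃ σ : Equiv.Perm (Fin n), ∀ i, (i, σ i) ∈ G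

/-- The bipartite graph on the vertex set `Fin n ⊕ Fin n` with edge set `G`. -/
def graphOn {n : ℕ} (G : Finset (Edge n)) : SimpleGraph (Fin n ⊕ Fin n) :=
  SimpleGraph.fromRel fun u v => ∃ e ∈ G, u = Sum.inl e.1 ∧ v = Sum.inr e.2

/-- The number of connected components of `G` (as a spanning subgraph of `K_{n,n}`). -/
noncomputable def numComponents {n : ℕ} (G : Finset (Edge n)) : ℕ :=
  Nat.card (graphOn G).ConnectedComponent

/-- The cyclomatic number `χ(G) = |E(G)| − |V(G)| + |C(G)|`. -/
noncomputable def cyclo {n : ℕ} (G : Finset (Edge n)) : ℤ :=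
  (G.card : ℤ) + numComponents G - 2 * n

/-- `G` is elementary: a connected matching-covered graph. -/
def elementary {n : ℕ} (G : Finset (Edge n)) : Prop :=
  matchingCovered G ∧ (graphOn G).Connected

/-- The bipartite perfect matching decision function, on inputs `x : Edge n → Bool`. -/
def BPMb (n : ℕ) (x : Edge n → Bool) : Prop :=
  ∃ σ : Equiv.Perm (Fin n), ∀ i, x (i, σ i) = true

/-!
If every nonempty proper set `S` of left vertices has more than `|S|` neighbours (positive
surplus) and `n ≥ 2`, the graph is elementary. Otherwise some `k`-sets `S`, `T` with
`1 ≤ k < n` have no edge from `S` to the complement of `T`, so a union bound leaves at most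
`∑ₖ C(n,k)² 2^{n² - k(n-k)} ≤ 2n⁴ 2^{n² - n}` graphs without positive surplus.
-/

namespace ElementaryBipartite

variable {n : ℕ}

def nbhd (G : Finset (Edge n)) (S : Finset (Fin n)) : Finset (Fin n) :=
  S.biUnion fun a => univ.filter fun b => (a, b) ∈ G

def HasPositiveSurplus (G : Finset (Edge n)) : Prop :=
  ∀ S : Finset (Fin n), S.Nonempty → S ≠ univ → #S < #(nbhd G S)

lemma mem_nbhd {G : Finset (Edge n)} {S : Finset (Fin n)} {b : Fin n} :
    b ∈ nbhd G S ↔ ∃ a ∈ S, (a, b) ∈ G := by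
  simp [nbhd]

lemma nbhd_subset_iff {G : Finset (Edge n)} {S T : Finset (Fin n)} :
    nbhd G S ⊆ T ↔ G ⊆ (S ×ˢ Tᶜ)ᶜ := by
  constructor
  · rintro h ⟨a, b⟩ hab
    simp only [mem_compl, mem_product, not_and, not_not]
    exact fun ha => h (mem_nbhd.2 ⟨a, ha, hab⟩)
  · intro h b hb
    obtain ⟨a, ha, hab⟩ := mem_nbhd.1 hb
    simpa [ha] using h hab

lemma graphOn_adj {G : Finset (Edge n)} {a b : Fin n} :
    (graphOn G).Adj (Sum.inl a) (Sum.inr b) ↔ (a, b) ∈ G := by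
  simp [graphOn]

namespace HasPositiveSurplus

variable {G : Finset (Edge n)}

lemma exists_mem (h : HasPositiveSurplus G) (hn : 2 ≤ n) (b : Fin n) : ∃ a, (a, b) ∈ G := by
  let S : Finset (Fin n) := univ.erase b
  have hS : #S = n - 1 := by simp [S]
  have hSne : S.Nonempty := card_pos.1 (by omega)
  have hSuniv : S ≠ univ := fun hS' => by simpa [S] using hS'.ge (mem_univ b)
  have hnbhd : nbhd G S = univ :=
    eq_univ_of_card _ <| le_antisymm (card_le_univ _) <| by
      have := h S hSne hSuniv
      rw [Fintype.card_fin]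
      omega
  obtain ⟨a, -, hab⟩ := mem_nbhd.1 (hnbhd ▸ mem_univ b)
  exact ⟨a, hab⟩

/-- Hall's theorem for the family sending `a` to `{b}` and every other left vertex to its
neighbours other than `b`; the surplus pays for the deleted vertex `b`. -/
lemma exists_perm_apply_eq (h : HasPositiveSurplus G) {a b : Fin n} (hab : (a, b) ∈ G) :
    ∃ σ : Equiv.Perm (Fin n), (∀ i, (i, σ i) ∈ G) ∧ σ a = b := by
  let t : Fin n → Finset (Fin n) := fun x =>
    if x = a then {b} else (univ.filter fun y => (x, y) ∈ G).erase b
  have hall_avoiding : ∀ s, a ∉ s → #s ≤ #(s.biUnion t) := by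
    intro s has
    rcases s.eq_empty_or_nonempty with rfl | hs
    · simp
    have hst : s.biUnion t = (nbhd G s).erase b := by
      rw [nbhd, erase_biUnion]
      exact biUnion_congr rfl fun x hx => if_neg (ne_of_mem_of_not_mem hx has)
    have hsurplus := h s hs (ne_of_mem_of_not_mem' (mem_univ a) has).symm
    have herase := pred_card_le_card_erase (s := nbhd G s) (a := b)
    rw [hst]
    omega
  have hall : ∀ s, #s ≤ #(s.biUnion t) := by
    intro s
    by_cases has : a ∈ s
    · have hb : b ∉ (s.erase a).biUnion t := by
        simp only [mem_biUnion, not_exists, not_and]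
        intro x hx
        simp [t, ne_of_mem_erase hx]
      have hst : s.biUnion t = insert b ((s.erase a).biUnion t) := by
        rw [← insert_erase has, biUnion_insert, erase_insert (notMem_erase a s)]
        simp only [t, if_pos rfl, insert_eq]
      rw [hst, card_insert_of_notMem hb, ← card_erase_add_one has]
      exact Nat.add_le_add_right (hall_avoiding _ (notMem_erase a s)) 1
    · exact hall_avoiding s has
  obtain ⟨f, hf, hft⟩ := (all_card_le_biUnion_card_iff_exists_injective t).1 hall
  have hfa : f a = b := by simpa [t] using hft a
  refine ⟨Equiv.ofBijective f (Finite.injective_iff_bijective.1 hf), fun i => ?_, hfa⟩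
  by_cases hia : i = a
  · subst hia
    simpa [hfa] using hab
  · have hi := hft i
    simp only [t, if_neg hia, mem_erase, mem_filter, mem_univ, true_and] at hi
    exact hi.2

lemma matchingCovered (h : HasPositiveSurplus G) (hn : 2 ≤ n) : matchingCovered G := by
  have hcover : ∀ e ∈ G, ∃ M, isPM M ∧ M ⊆ G ∧ e ∈ M := by
    rintro ⟨a, b⟩ hab
    obtain ⟨σ, hσG, hσa⟩ := h.exists_perm_apply_eq hab
    refine ⟨univ.image fun i => (i, σ i), ⟨σ, rfl⟩, ?_, mem_image.2 ⟨a, mem_univ a, by rw [hσa]⟩⟩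
    rintro _ he
    obtain ⟨i, -, rfl⟩ := mem_image.1 he
    exact hσG i
  obtain ⟨a, hab⟩ := h.exists_mem hn ⟨0, by omega⟩
  obtain ⟨M₀, hM₀, hM₀G, -⟩ := hcover _ hab
  refine ⟨univ.filter fun M => isPM M ∧ M ⊆ G, ⟨M₀, by simp [hM₀, hM₀G]⟩,
    fun M hM => (mem_filter.1 hM).2.1,
    le_antisymm (Finset.sup_le fun M hM => (mem_filter.1 hM).2.2) ?_⟩
  intro e he
  obtain ⟨M, hM, hMG, heM⟩ := hcover e he
  exact mem_sup.2 ⟨M, by simp [hM, hMG], heM⟩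

/-- If the left vertices `S` reachable from a fixed one were not everything, then both `S` and
its complement would have more neighbours than elements; but these neighbours lie in the
reachable right vertices `T` and in `Tᶜ` respectively, so `n < n`. -/
lemma connected (h : HasPositiveSurplus G) (hn : 2 ≤ n) : (graphOn G).Connected := by
  let a₀ : Fin n := ⟨0, by omega⟩
  let R := (graphOn G).Reachable (Sum.inl a₀)
  let S : Finset (Fin n) := univ.filter fun a => R (Sum.inl a)
  let T : Finset (Fin n) := univ.filter fun b => R (Sum.inr b)
  have hedge : ∀ {a b}, (a, b) ∈ G → (R (Sum.inl a) ↔ R (Sum.inr b)) := fun hab =>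
    ⟨fun ha => ha.trans (graphOn_adj.2 hab).reachable,
      fun hb => hb.trans (graphOn_adj.2 hab).reachable.symm⟩
  have hS : nbhd G S ⊆ T := fun b hb => by
    obtain ⟨a, ha, hab⟩ := mem_nbhd.1 hb
    simpa [S, T, hedge hab] using ha
  have hSc : nbhd G Sᶜ ⊆ Tᶜ := fun b hb => by
    obtain ⟨a, ha, hab⟩ := mem_nbhd.1 hb
    simpa [S, T, hedge hab] using ha
  have hS_univ : S = univ := by
    by_contra hne
    have hSne : S.Nonempty := ⟨a₀, by simp [S, R]⟩
    have h₁ := (h S hSne hne).trans_le (card_le_card hS)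
    have hScne : Sᶜ.Nonempty := (compl_ne_univ_iff_nonempty _).1 (by rwa [compl_compl])
    have h₂ := (h Sᶜ hScne ((compl_ne_univ_iff_nonempty S).2 hSne)).trans_le (card_le_card hSc)
    rw [card_compl, card_compl] at h₂
    have hT := card_le_univ T
    omega
  have hreach_inl : ∀ a, R (Sum.inl a) := fun a => by
    simpa [S] using hS_univ.ge (mem_univ a)
  refine (graphOn G).connected_iff_exists_forall_reachable.2 ⟨Sum.inl a₀, ?_⟩
  rintro (a | b)
  · exact hreach_inl a
  · obtain ⟨a, hab⟩ := h.exists_mem hn b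
    exact (hedge hab).1 (hreach_inl a)

lemma elementary (h : HasPositiveSurplus G) (hn : 2 ≤ n) : elementary G :=
  ⟨h.matchingCovered hn, h.connected hn⟩

end HasPositiveSurplus

lemma sq_le_two_pow_sub_four (hn : 16 ≤ n) : n ^ 2 ≤ 2 ^ (n - 4) := by
  induction n, hn using Nat.le_induction with
  | base => norm_num
  | succ m hm ih =>
    rw [show m + 1 - 4 = m - 4 + 1 by omega, pow_succ 2 (m - 4)]
    nlinarith

lemma pow_mul_two_pow_le {j : ℕ} (hj : 1 ≤ j) (hjn : j < n) (h : n ^ 2 ≤ 2 ^ (n - j - 1)) :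
    n ^ (2 * j) * 2 ^ n ≤ 2 * n ^ 2 * 2 ^ (j * (n - j)) := by
  obtain ⟨i, rfl⟩ := Nat.exists_eq_add_of_le' hj
  obtain ⟨m, hnm⟩ : ∃ m, n = i + m + 2 := ⟨n - i - 2, by omega⟩
  have hexp : m * i + n = (i + 1) * (n - (i + 1)) + 1 := by
    rw [hnm, show i + m + 2 - (i + 1) = m + 1 by omega]
    ring
  calc n ^ (2 * (i + 1)) * 2 ^ n = n ^ 2 * ((n ^ 2) ^ i * 2 ^ n) := by
        rw [pow_mul, pow_succ]
        ring
    _ ≤ n ^ 2 * ((2 ^ m) ^ i * 2 ^ n) := by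
        rw [show n - (i + 1) - 1 = m by omega] at h
        exact Nat.mul_le_mul_left _ (Nat.mul_le_mul_right _ (Nat.pow_le_pow_left h i))
    _ = 2 * n ^ 2 * 2 ^ ((i + 1) * (n - (i + 1))) := by
        rw [← pow_mul, ← pow_add, hexp, pow_succ]
        ring

/-- For small `k` the binomial coefficient is at most `n ^ k`; in the middle range the trivial
bound `2 ^ n` suffices, since then `k (n - k) ≥ 4 (n - 4) ≥ 3 n`. -/
lemma choose_sq_mul_two_pow_le (hn : 16 ≤ n) {k : ℕ} (hk : 1 ≤ k) (hkn : k < n) :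
    n.choose k ^ 2 * 2 ^ n ≤ 2 * n ^ 2 * 2 ^ (k * (n - k)) := by
  wlog hhalf : k ≤ n - k generalizing k
  · have := this (k := n - k) (by omega) (by omega) (by omega)
    rwa [Nat.choose_symm hkn.le, Nat.sub_sub_self hkn.le, mul_comm (n - k)] at this
  by_cases hk3 : k ≤ 3
  · calc n.choose k ^ 2 * 2 ^ n ≤ n ^ (2 * k) * 2 ^ n := by
          rw [mul_comm 2 k, pow_mul]
          gcongr
          exact Nat.choose_le_pow n k
      _ ≤ 2 * n ^ 2 * 2 ^ (k * (n - k)) :=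
          pow_mul_two_pow_le hk hkn <|
            (sq_le_two_pow_sub_four hn).trans (Nat.pow_le_pow_right two_pos (by omega))
  · have hexp : 3 * n ≤ k * (n - k) := by
      obtain ⟨a, rfl⟩ : ∃ a, k = a + 4 := ⟨k - 4, by omega⟩
      obtain ⟨l, hl⟩ := Nat.exists_eq_add_of_le hhalf
      rw [hl]
      nlinarith [show n = 2 * a + 8 + l by omega]
    calc n.choose k ^ 2 * 2 ^ n ≤ (2 ^ n) ^ 2 * 2 ^ n := by
          gcongr
          exact Nat.choose_le_two_pow n k
      _ = 2 ^ (3 * n) := by ring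
      _ ≤ 2 ^ (k * (n - k)) := Nat.pow_le_pow_right two_pos hexp
      _ ≤ 2 * n ^ 2 * 2 ^ (k * (n - k)) := Nat.le_mul_of_pos_left _ (by positivity)

lemma card_univ_finset_edge : #(univ : Finset (Finset (Edge n))) = 2 ^ n ^ 2 := by
  simp [sq]

/-- The graphs in which some `k` left vertices have all their neighbours among some `k` right
vertices. -/
def tightSetGraphs (n k : ℕ) : Finset (Finset (Edge n)) :=
  (powersetCard k univ).biUnion fun S =>
    (powersetCard k univ).biUnion fun T => ((S ×ˢ Tᶜ)ᶜ).powerset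

lemma filter_not_hasPositiveSurplus_subset :
    univ.filter (fun G : Finset (Edge n) => ¬ HasPositiveSurplus G) ⊆
      (Icc 1 (n - 1)).biUnion (tightSetGraphs n) := by
  intro G hG
  simp only [HasPositiveSurplus, mem_filter, mem_univ, true_and, not_forall, not_lt] at hG
  obtain ⟨S, hSne, hSuniv, hcard⟩ := hG
  obtain ⟨T, hST, -, hT⟩ := exists_subsuperset_card_eq (subset_univ (nbhd G S)) hcard
    (card_le_univ S)
  have hSlt : #S < n := by simpa using (card_lt_iff_ne_univ S).2 hSuniv
  simp only [tightSetGraphs, mem_biUnion, mem_Icc, mem_powersetCard, mem_powerset]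
  exact ⟨#S, ⟨card_pos.2 hSne, by omega⟩, S, ⟨subset_univ S, rfl⟩, T, ⟨subset_univ T, hT⟩,
    nbhd_subset_iff.1 hST⟩

lemma card_tightSetGraphs_le (k : ℕ) :
    #(tightSetGraphs n k) ≤ n.choose k ^ 2 * 2 ^ (n ^ 2 - k * (n - k)) := by
  calc #(tightSetGraphs n k)
      ≤ #(powersetCard k (univ : Finset (Fin n))) *
          (#(powersetCard k (univ : Finset (Fin n))) * 2 ^ (n ^ 2 - k * (n - k))) :=
        card_biUnion_le_card_mul _ _ _ fun S hS => card_biUnion_le_card_mul _ _ _ fun T hT => by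
          rw [mem_powersetCard] at hS hT
          simp [card_compl, hS.2, hT.2, sq]
    _ = n.choose k ^ 2 * 2 ^ (n ^ 2 - k * (n - k)) := by simp [sq, mul_assoc]

lemma card_not_hasPositiveSurplus_mul_two_pow_le (hn₀ : 0 < n) :
    #(univ.filter fun G : Finset (Edge n) => ¬ HasPositiveSurplus G) * 2 ^ n
      ≤ 2 * n ^ 4 * 2 ^ n ^ 2 := by
  by_cases hn : n < 16
  · have hsmall : 2 ^ n ≤ 2 * n ^ 4 := by interval_cases n <;> norm_num
    calc #(univ.filter fun G : Finset (Edge n) => ¬ HasPositiveSurplus G) * 2 ^ n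
        ≤ 2 ^ n ^ 2 * (2 * n ^ 4) :=
          Nat.mul_le_mul ((card_filter_le _ _).trans card_univ_finset_edge.le) hsmall
      _ = 2 * n ^ 4 * 2 ^ n ^ 2 := mul_comm _ _
  push Not at hn
  calc #(univ.filter fun G : Finset (Edge n) => ¬ HasPositiveSurplus G) * 2 ^ n
      ≤ (∑ k ∈ Icc 1 (n - 1), n.choose k ^ 2 * 2 ^ (n ^ 2 - k * (n - k))) * 2 ^ n := by
        gcongr
        exact (card_le_card filter_not_hasPositiveSurplus_subset).trans <|
          card_biUnion_le.trans (sum_le_sum fun k _ => card_tightSetGraphs_le k)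
    _ ≤ ∑ _k ∈ Icc 1 (n - 1), 2 * n ^ 2 * 2 ^ n ^ 2 := by
        rw [sum_mul]
        refine sum_le_sum fun k hk => ?_
        rw [mem_Icc] at hk
        have hle : k * (n - k) ≤ n ^ 2 := by
          rw [sq]
          exact Nat.mul_le_mul (by omega) (Nat.sub_le n k)
        calc n.choose k ^ 2 * 2 ^ (n ^ 2 - k * (n - k)) * 2 ^ n
            = n.choose k ^ 2 * 2 ^ n * 2 ^ (n ^ 2 - k * (n - k)) := by ring
          _ ≤ 2 * n ^ 2 * 2 ^ (k * (n - k)) * 2 ^ (n ^ 2 - k * (n - k)) :=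
            Nat.mul_le_mul_right _ (choose_sq_mul_two_pow_le hn hk.1 (by omega))
          _ = 2 * n ^ 2 * 2 ^ n ^ 2 := by
            rw [mul_assoc, ← pow_add, Nat.add_sub_cancel' hle]
    _ ≤ 2 * n ^ 4 * 2 ^ n ^ 2 := by
        have hn2 : (n - 1) * n ^ 2 ≤ n ^ 4 := by
          calc (n - 1) * n ^ 2 ≤ n ^ 2 * n ^ 2 :=
                Nat.mul_le_mul_right _ ((Nat.sub_le n 1).trans (Nat.le_self_pow two_ne_zero n))
            _ = n ^ 4 := by ring
        rw [sum_const, Nat.card_Icc, smul_eq_mul, show n - 1 + 1 - 1 = n - 1 by omega]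
        calc (n - 1) * (2 * n ^ 2 * 2 ^ n ^ 2) = (n - 1) * n ^ 2 * (2 * 2 ^ n ^ 2) := by ring
          _ ≤ n ^ 4 * (2 * 2 ^ n ^ 2) := Nat.mul_le_mul_right _ hn2
          _ = 2 * n ^ 4 * 2 ^ n ^ 2 := by ring

lemma card_elementary_ge (hn : 2 ≤ n) :
    (2 : ℝ) ^ n ^ 2 * (1 - 2 * (n : ℝ) ^ 4 / 2 ^ n)
      ≤ #(univ.filter fun G : Finset (Edge n) => elementary G) := by
  have hbad : (#(univ.filter fun G : Finset (Edge n) => ¬ HasPositiveSurplus G) : ℝ)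
      ≤ 2 * (n : ℝ) ^ 4 * 2 ^ n ^ 2 / 2 ^ n := by
    rw [le_div_iff₀ (by positivity)]
    exact_mod_cast card_not_hasPositiveSurplus_mul_two_pow_le (by omega)
  have htotal : (#(univ.filter fun G : Finset (Edge n) => HasPositiveSurplus G) : ℝ)
      + #(univ.filter fun G : Finset (Edge n) => ¬ HasPositiveSurplus G) = 2 ^ n ^ 2 := by
    exact_mod_cast (card_filter_add_card_filter_not _).trans card_univ_finset_edge
  have hgood : (#(univ.filter fun G : Finset (Edge n) => HasPositiveSurplus G) : ℝ)
      ≤ #(univ.filter fun G : Finset (Edge n) => elementary G) :=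
    Nat.cast_le.2 <| card_le_card fun G hG =>
      mem_filter.2 ⟨mem_univ G, (mem_filter.1 hG).2.elementary hn⟩
  calc (2 : ℝ) ^ n ^ 2 * (1 - 2 * (n : ℝ) ^ 4 / 2 ^ n)
      = 2 ^ n ^ 2 - 2 * (n : ℝ) ^ 4 * 2 ^ n ^ 2 / 2 ^ n := by ring
    _ ≤ (#(univ.filter fun G : Finset (Edge n) => elementary G) : ℝ) := by linarith

end ElementaryBipartite

open ElementaryBipartite Filter Topology

/-- for `n > 1`, the number of elementary subgraphs of `K_{n,n}` is at least
`2^{n²}·(1 − 2n⁴/2ⁿ)`; in particular the proportion of subgraphs of `K_{n,n}` that are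
matching-covered tends to `1` as `n → ∞`. -/
theorem stmt5 (n : ℕ) (hn : 1 < n) :
    ((2 : ℝ) ^ (n ^ 2) * (1 - 2 * (n : ℝ) ^ 4 / 2 ^ n)
        ≤ ((Finset.univ.filter fun G : Finset (Edge n) => elementary G).card : ℝ)) ∧
    Filter.Tendsto
      (fun m : ℕ =>
        ((Finset.univ.filter fun G : Finset (Edge m) => matchingCovered G).card : ℝ)
          / 2 ^ (m ^ 2))
      Filter.atTop (nhds 1) := by
  refine ⟨card_elementary_ge hn, ?_⟩
  have hlower : Tendsto (fun m : ℕ => 1 - 2 * ((m : ℝ) ^ 4 / 2 ^ m)) atTop (𝓝 1) := by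
    simpa using ((tendsto_pow_const_div_const_pow_of_one_lt 4 one_lt_two).const_mul 2).const_sub 1
  refine tendsto_of_tendsto_of_tendsto_of_le_of_le' hlower tendsto_const_nhds ?_
    (Eventually.of_forall fun m => ?_)
  · filter_upwards [eventually_ge_atTop 2] with m hm
    rw [le_div_iff₀ (by positivity), mul_comm, ← mul_div_assoc]
    exact (card_elementary_ge hm).trans <|
      Nat.cast_le.2 <| card_le_card fun G hG => mem_filter.2 ⟨mem_univ G, (mem_filter.1 hG).2.1⟩
  · rw [div_le_one (by positivity)]
    exact_mod_cast (card_filter_le _ _).trans card_univ_finset_edge.le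
end

section
/- A random bipartite graph G on parts of size n each, with each of the n² edges present independently with probability 1/2, has no perfect matching with probability at most n²/2ⁿ. -/
open Finset
open scoped Classical

/-!
If `G` has no perfect matching, Hall's theorem gives a set `S` of left vertices, which we take
minimal, whose neighbourhood `B` has exactly `#S - 1` elements. For fixed `S` and `B` the columns
of `G` are independent: for `b ∈ B` a set meeting `S`, for `b ∉ B` a subset of `Sᶜ`, leaving at
most `(2ⁿ - 2ⁿ⁻ˢ)ˢ⁻¹ (2ⁿ⁻ˢ)ⁿ⁻ˢ⁺¹ ≤ 2^(n² - s(n + 1 - s))` graphs. Summing over `S` and `B`, the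
estimate `C(n, s) C(n, s - 1) ≤ n 2^((s - 1)(n - s))` (for `n ≥ 6`) bounds each of the `n` values
of `s = #S` by `n 2^(n² - n)`. The cases `n ≤ 5` are checked numerically, except `n = 4`, where
the union bound is too weak but the claim is the trivial bound `1`.
-/

lemma add_mul_add_succ_le_mul_two_pow {s d : ℕ} (hs : 1 ≤ s) (h : 2 ≤ s ∨ 4 ≤ d) :
    (s + d) * (s + d + 1) ≤ s * (s + 1) * 2 ^ d := by
  induction d with
  | zero => simp
  | succ d ih =>
    have hstep : (s + d + 1) * (s + d + 2) ≤ 2 * ((s + d) * (s + d + 1)) := by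
      rcases h with h | h <;> nlinarith
    rcases (show d = 3 ∧ s = 1 ∨ 2 ≤ s ∨ 4 ≤ d by omega) with ⟨rfl, rfl⟩ | hsd
    · norm_num
    · calc _ ≤ 2 * ((s + d) * (s + d + 1)) := by linarith
        _ ≤ 2 * (s * (s + 1) * 2 ^ d) := Nat.mul_le_mul_left 2 (ih hsd)
        _ = _ := by ring

/-- Raising `a` by one while lowering `b` by one multiplies the left side by
`(b + 1)(b + 2) / ((a + 1)(a + 2))` and the right side by `2 ^ (b - a)`. -/
lemma choose_mul_choose_succ_le_of_le {a b : ℕ} (hab : a ≤ b) (hn : 5 ≤ a + b) :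
    (a + b + 1).choose a * (a + b + 1).choose (a + 1) ≤ (a + b + 1) * 2 ^ (a * b) := by
  induction a generalizing b with
  | zero => simp
  | succ a ih =>
    have ih := ih (b := b + 1) (by omega) (by omega)
    rw [show a + (b + 1) + 1 = a + 1 + b + 1 by ring] at ih
    set m := a + 1 + b + 1 with hm
    have h₁ : m.choose (a + 1) * (a + 1) = m.choose a * (b + 2) := by
      rw [Nat.choose_succ_right_eq]; congr 1; omega
    have h₂ : m.choose (a + 2) * (a + 2) = m.choose (a + 1) * (b + 1) := by
      rw [Nat.choose_succ_right_eq]; congr 1; omega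
    have hratio := add_mul_add_succ_le_mul_two_pow (s := a + 1) (d := b - a) (by omega) (by omega)
    rw [show a + 1 + (b - a) = b + 1 by omega] at hratio
    refine Nat.le_of_mul_le_mul_right (c := (a + 1) * (a + 2)) ?_ (by positivity)
    calc m.choose (a + 1) * m.choose (a + 1 + 1) * ((a + 1) * (a + 2))
        = m.choose (a + 1) * (a + 1) * (m.choose (a + 2) * (a + 2)) := by ring
      _ = m.choose a * m.choose (a + 1) * ((b + 1) * (b + 1 + 1)) := by rw [h₁, h₂]; ring
      _ ≤ m * 2 ^ (a * (b + 1)) * ((a + 1) * (a + 1 + 1) * 2 ^ (b - a)) := by gcongr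
      _ = m * 2 ^ ((a + 1) * b) * ((a + 1) * (a + 2)) := by
          rw [show (a + 1) * b = a * (b + 1) + (b - a) by zify [show a ≤ b by omega]; ring,
            pow_add]
          ring

lemma choose_mul_choose_succ_le {a b : ℕ} (hn : 5 ≤ a + b) :
    (a + b + 1).choose a * (a + b + 1).choose (a + 1) ≤ (a + b + 1) * 2 ^ (a * b) := by
  rcases le_total a b with hab | hba
  · exact choose_mul_choose_succ_le_of_le hab hn
  · have h := choose_mul_choose_succ_le_of_le hba (by omega)
    rw [show b + a + 1 = a + (b + 1) by ring, ← Nat.choose_symm_add,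
      show a + (b + 1) = a + 1 + b by ring, ← Nat.choose_symm_add] at h
    rw [show a + b + 1 = a + 1 + b by ring, mul_comm a b]
    linarith

section

variable {n : ℕ}

def neighbors (G : Finset (Edge n)) (a : Fin n) : Finset (Fin n) :=
  univ.filter fun b => (a, b) ∈ G

lemma exists_card_biUnion_neighbors_add_one_eq {G : Finset (Edge n)} (hG : ¬ hasPM G) :
    ∃ S : Finset (Fin n), #(S.biUnion (neighbors G)) + 1 = #S := by
  obtain ⟨S₀, hS₀⟩ : ∃ S : Finset (Fin n), #(S.biUnion (neighbors G)) < #S := by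
    by_contra! hall
    obtain ⟨σ, hσ, hσG⟩ := (all_card_le_biUnion_card_iff_exists_injective _).mp hall
    exact hG ⟨Equiv.ofBijective σ (Finite.injective_iff_bijective.mp hσ),
      by simpa [neighbors] using hσG⟩
  obtain ⟨S, hSmem, hmin⟩ := exists_min_image
    (univ.filter fun S : Finset (Fin n) => #(S.biUnion (neighbors G)) < #S) card
    ⟨S₀, mem_filter.mpr ⟨mem_univ _, hS₀⟩⟩
  have hS : #(S.biUnion (neighbors G)) < #S := (mem_filter.mp hSmem).2
  refine ⟨S, le_antisymm hS ?_⟩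
  by_contra! hgap
  obtain ⟨a, ha⟩ : S.Nonempty := card_pos.mp (by omega)
  have hsub := card_le_card
    (biUnion_subset_biUnion_of_subset_left (neighbors G) (erase_subset a S))
  have := hmin (S.erase a) (mem_filter.mpr ⟨mem_univ _, by rw [card_erase_of_mem ha]; omega⟩)
  rw [card_erase_of_mem ha] at this
  omega

lemma card_filter_not_disjoint (S : Finset (Fin n)) :
    #(univ.filter fun A : Finset (Fin n) => ¬ Disjoint A S) = 2 ^ n - 2 ^ (n - #S) := by
  have hdisj : (univ.filter fun A : Finset (Fin n) => Disjoint A S) = Sᶜ.powerset := by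
    ext A
    simp [subset_compl_iff_disjoint_right]
  have := card_filter_add_card_filter_not (s := univ) fun A : Finset (Fin n) => Disjoint A S
  rw [hdisj, card_powerset, card_compl, Fintype.card_fin, card_univ, Fintype.card_finset,
    Fintype.card_fin] at this
  omega

/-- The columns `{a | (a, b) ∈ G}` of a graph with `N(S) = B` range independently over the sets
meeting `S` (for `b ∈ B`) and the subsets of `Sᶜ` (for `b ∉ B`). -/
lemma card_filter_biUnion_neighbors_eq_le (S B : Finset (Fin n)) :
    #(univ.filter fun G : Finset (Edge n) => S.biUnion (neighbors G) = B)
      ≤ (2 ^ n - 2 ^ (n - #S)) ^ #B * (2 ^ (n - #S)) ^ (n - #B) := by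
  set columns : Fin n → Finset (Finset (Fin n)) := fun b =>
    if b ∈ B then univ.filter fun A => ¬ Disjoint A S else Sᶜ.powerset
  have hinj : Function.Injective fun (G : Finset (Edge n)) b =>
      univ.filter fun a => (a, b) ∈ G := by
    intro G G' h
    ext ⟨a, b⟩
    simpa using congrArg (a ∈ ·) (congrFun h b)
  calc _ ≤ #(Fintype.piFinset columns) := by
        refine card_le_card_of_injOn _
          (fun G hG => Fintype.mem_piFinset.mpr fun b => ?_) hinj.injOn
        have hB : S.biUnion (neighbors G) = B := (mem_filter.mp hG).2
        by_cases hb : b ∈ B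
        · obtain ⟨a, ha, hab⟩ := mem_biUnion.mp (hB ▸ hb)
          simp only [columns, if_pos hb, mem_filter, mem_univ, true_and, not_disjoint_iff]
          exact ⟨a, by simpa [neighbors] using hab, ha⟩
        · simp only [columns, if_neg hb, mem_powerset, subset_iff, mem_filter, mem_univ,
            true_and, mem_compl]
          exact fun a hab ha =>
            hb (hB ▸ mem_biUnion.mpr ⟨a, ha, by simpa [neighbors] using hab⟩)
    _ = _ := by
        simp only [Fintype.card_piFinset, columns, apply_ite card, prod_ite, prod_const,
          card_filter_not_disjoint, card_powerset, card_compl, Fintype.card_fin]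
        simp [filter_not, card_sdiff]

end

/-- The union bound over all `B` and all `S` with `#S = #B + 1`, grouped by `k = #B`. -/
def hallBound (n : ℕ) : ℕ :=
  ∑ k ∈ range (n + 1), n.choose k *
    (n.choose (k + 1) * ((2 ^ n - 2 ^ (n - (k + 1))) ^ k * (2 ^ (n - (k + 1))) ^ (n - k)))

lemma card_filter_not_hasPM_le_hallBound (n : ℕ) :
    #(univ.filter fun G : Finset (Edge n) => ¬ hasPM G) ≤ hallBound n := by
  have hcover : (univ.filter fun G : Finset (Edge n) => ¬ hasPM G) ⊆
      univ.biUnion fun B : Finset (Fin n) => (powersetCard (#B + 1) univ).biUnion fun S =>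
        univ.filter fun G => S.biUnion (neighbors G) = B := by
    intro G hG
    obtain ⟨S, hS⟩ := exists_card_biUnion_neighbors_add_one_eq (mem_filter.mp hG).2
    simp only [mem_biUnion, mem_univ, true_and, mem_powersetCard, subset_univ, mem_filter]
    exact ⟨_, S, hS.symm, rfl⟩
  calc _ ≤ ∑ B : Finset (Fin n), ∑ S ∈ powersetCard (#B + 1) univ,
        (2 ^ n - 2 ^ (n - #S)) ^ #B * (2 ^ (n - #S)) ^ (n - #B) := by
        refine (card_le_card hcover).trans (card_biUnion_le.trans (sum_le_sum fun B _ => ?_))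
        exact card_biUnion_le.trans (sum_le_sum fun S _ => card_filter_biUnion_neighbors_eq_le S B)
    _ = ∑ B : Finset (Fin n), n.choose (#B + 1) *
        ((2 ^ n - 2 ^ (n - (#B + 1))) ^ #B * (2 ^ (n - (#B + 1))) ^ (n - #B)) := by
        refine sum_congr rfl fun B _ => ?_
        rw [sum_congr rfl fun S hS => by rw [(mem_powersetCard.mp hS).2], sum_const,
          card_powersetCard, card_univ, Fintype.card_fin, smul_eq_mul]
    _ = hallBound n := by
        rw [← powerset_univ, sum_powerset_apply_card fun k =>
          n.choose (k + 1) * ((2 ^ n - 2 ^ (n - (k + 1))) ^ k * (2 ^ (n - (k + 1))) ^ (n - k))]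
        simp [hallBound]

lemma hallBound_term_mul_two_pow_le {n k : ℕ} (hn : 6 ≤ n) (hk : k < n) :
    n.choose k * (n.choose (k + 1) *
      ((2 ^ n - 2 ^ (n - (k + 1))) ^ k * (2 ^ (n - (k + 1))) ^ (n - k))) * 2 ^ n
      ≤ n * 2 ^ (n ^ 2) := by
  obtain ⟨b, rfl⟩ : ∃ b, n = k + b + 1 := ⟨n - k - 1, by omega⟩
  rw [show k + b + 1 - (k + 1) = b by omega, show k + b + 1 - k = b + 1 by omega]
  calc _ = (k + b + 1).choose k * (k + b + 1).choose (k + 1)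
        * ((2 ^ (k + b + 1) - 2 ^ b) ^ k * (2 ^ b) ^ (b + 1)) * 2 ^ (k + b + 1) := by ring
    _ ≤ (k + b + 1) * 2 ^ (k * b) * ((2 ^ (k + b + 1)) ^ k * (2 ^ b) ^ (b + 1))
        * 2 ^ (k + b + 1) :=
        Nat.mul_le_mul_right _ (Nat.mul_le_mul (choose_mul_choose_succ_le (by omega))
          (Nat.mul_le_mul_right _ (Nat.pow_le_pow_left (Nat.sub_le _ _) k)))
    _ = (k + b + 1) * 2 ^ ((k + b + 1) ^ 2) := by
        rw [← pow_mul, ← pow_mul, mul_assoc, mul_assoc, ← pow_add, ← pow_add, ← pow_add]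
        ring_nf

lemma hallBound_mul_two_pow_le {n : ℕ} (hn : n ≠ 4) :
    hallBound n * 2 ^ n ≤ n ^ 2 * 2 ^ (n ^ 2) := by
  rcases lt_or_ge n 6 with hsmall | hlarge
  · interval_cases n <;> first | omega | decide
  calc hallBound n * 2 ^ n = ∑ k ∈ range n, n.choose k * (n.choose (k + 1) *
        ((2 ^ n - 2 ^ (n - (k + 1))) ^ k * (2 ^ (n - (k + 1))) ^ (n - k))) * 2 ^ n := by
        simp only [hallBound, sum_range_succ, Nat.choose_succ_self, zero_mul, mul_zero, add_zero,
          sum_mul]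
    _ ≤ ∑ _k ∈ range n, n * 2 ^ (n ^ 2) :=
        sum_le_sum fun k hk => hallBound_term_mul_two_pow_le hlarge (mem_range.mp hk)
    _ = n ^ 2 * 2 ^ (n ^ 2) := by rw [sum_const, card_range, smul_eq_mul]; ring

lemma card_filter_not_hasPM_mul_two_pow_le (n : ℕ) :
    #(univ.filter fun G : Finset (Edge n) => ¬ hasPM G) * 2 ^ n ≤ n ^ 2 * 2 ^ (n ^ 2) := by
  by_cases hn : n = 4
  · subst hn
    have : #(univ : Finset (Finset (Edge 4))) = 2 ^ 16 := by simp
    have := card_filter_le (univ : Finset (Finset (Edge 4))) fun G => ¬ hasPM G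
    omega
  · exact (Nat.mul_le_mul_right _ (card_filter_not_hasPM_le_hallBound n)).trans
      (hallBound_mul_two_pow_le hn)

/-- a uniformly random balanced bipartite graph (each of the `n²` edges present
independently with probability `1/2`) has no perfect matching with probability at most
`n²/2ⁿ`. -/
theorem stmt6 (n : ℕ) :
    ((Finset.univ.filter fun G : Finset (Edge n) => ¬ hasPM G).card : ℝ) / 2 ^ (n ^ 2)
      ≤ (n : ℝ) ^ 2 / 2 ^ n := by
  rw [div_le_div_iff₀ (by positivity) (by positivity)]
  exact_mod_cast card_filter_not_hasPM_mul_two_pow_le n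
end

section
/- Let G be an elementary bipartite graph and let H be a matching-covered spanning subgraph of G with H ≠ G. Then the cyclomatic number satisfies χ(H) < χ(G). -/
open Finset
open scoped Classical

lemma graphOn_adj {n : ℕ} (F : Finset (Edge n)) (u v : Fin n ⊕ Fin n) :
    (graphOn F).Adj u v ↔
      ∃ x y, (x, y) ∈ F ∧ ((u = Sum.inl x ∧ v = Sum.inr y) ∨ (u = Sum.inr y ∧ v = Sum.inl x)) := by
  unfold graphOn
  rw [SimpleGraph.fromRel_adj]
  constructor
  · rintro ⟨hne, h | h⟩
    · obtain ⟨⟨x, y⟩, hp, h1, h2⟩ := h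
      exact ⟨x, y, hp, Or.inl ⟨h1, h2⟩⟩
    · obtain ⟨⟨x, y⟩, hp, h1, h2⟩ := h
      exact ⟨x, y, hp, Or.inr ⟨h2, h1⟩⟩
  · rintro ⟨x, y, hp, ⟨h1, h2⟩ | ⟨h1, h2⟩⟩
    · subst h1; subst h2; exact ⟨by simp, Or.inl ⟨(x, y), hp, rfl, rfl⟩⟩
    · subst h1; subst h2; exact ⟨by simp, Or.inr ⟨(x, y), hp, rfl, rfl⟩⟩

lemma graphOn_adj' {n : ℕ} (F : Finset (Edge n)) (x y : Fin n) :
    (graphOn F).Adj (Sum.inl x) (Sum.inr y) ↔ (x, y) ∈ F := by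
  rw [graphOn_adj]
  constructor
  · rintro ⟨x', y', hp, ⟨h1, h2⟩ | ⟨h1, h2⟩⟩
    · simp at h1 h2; subst h1; subst h2; exact hp
    · simp at h1
  · intro h; exact ⟨x, y, h, Or.inl ⟨rfl, rfl⟩⟩

lemma graphOn_mono {n : ℕ} {F F' : Finset (Edge n)} (h : F ⊆ F') : graphOn F ≤ graphOn F' := by
  intro u v hadj
  rw [graphOn_adj] at hadj ⊢
  obtain ⟨x, y, hp, hc⟩ := hadj
  exact ⟨x, y, h hp, hc⟩

/-- Reachability in `insert (a,b) F` decomposes. -/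
lemma reach_insert {n : ℕ} (F : Finset (Edge n)) (a b : Fin n) {v w : Fin n ⊕ Fin n}
    (h : (graphOn (insert (a, b) F)).Reachable v w) :
    (graphOn F).Reachable v w ∨
      (((graphOn F).Reachable v (Sum.inl a) ∨ (graphOn F).Reachable v (Sum.inr b)) ∧
       ((graphOn F).Reachable w (Sum.inl a) ∨ (graphOn F).Reachable w (Sum.inr b))) := by
  obtain ⟨p⟩ := h
  induction p with
  | nil => exact Or.inl (SimpleGraph.Reachable.refl _)
  | @cons u x w hadj p ih =>
    rw [graphOn_adj] at hadj
    obtain ⟨x', y', hp, hc⟩ := hadj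
    rcases Finset.mem_insert.mp hp with heq | hmem
    · -- the new edge
      have hx' : a = x' := by rw [Prod.ext_iff] at heq; exact heq.1.symm
      have hy' : b = y' := by rw [Prod.ext_iff] at heq; exact heq.2.symm
      subst hx'; subst hy'
      have hu : (graphOn F).Reachable u (Sum.inl a) ∨ (graphOn F).Reachable u (Sum.inr b) := by
        rcases hc with ⟨h1, _⟩ | ⟨h1, _⟩
        · exact Or.inl (h1 ▸ SimpleGraph.Reachable.refl _)
        · exact Or.inr (h1 ▸ SimpleGraph.Reachable.refl _)
      have hx : (graphOn F).Reachable x (Sum.inl a) ∨ (graphOn F).Reachable x (Sum.inr b) := by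
        rcases hc with ⟨_, h2⟩ | ⟨_, h2⟩
        · exact Or.inr (h2 ▸ SimpleGraph.Reachable.refl _)
        · exact Or.inl (h2 ▸ SimpleGraph.Reachable.refl _)
      rcases ih with hxw | ⟨_, hw⟩
      · refine Or.inr ⟨hu, ?_⟩
        rcases hx with hxa | hxb
        · exact Or.inl (hxw.symm.trans hxa)
        · exact Or.inr (hxw.symm.trans hxb)
      · exact Or.inr ⟨hu, hw⟩
    · -- an old edge: u and x are F-adjacent
      have hux : (graphOn F).Adj u x := (graphOn_adj F u x).mpr ⟨x', y', hmem, hc⟩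
      rcases ih with hxw | ⟨hx, hw⟩
      · exact Or.inl (hux.reachable.trans hxw)
      · refine Or.inr ⟨?_, hw⟩
        rcases hx with hxa | hxb
        · exact Or.inl (hux.reachable.trans hxa)
        · exact Or.inr (hux.reachable.trans hxb)

/-- Adding an edge decreases the number of components by at most one. -/
lemma numComponents_le_insert {n : ℕ} (F : Finset (Edge n)) (a b : Fin n) :
    numComponents F ≤ numComponents (insert (a, b) F) + 1 := by
  classical
  set Gi := graphOn (insert (a, b) F) with hGi
  have hle : graphOn F ≤ Gi := graphOn_mono (Finset.subset_insert _ _)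
  let φ : (graphOn F).ConnectedComponent → Gi.ConnectedComponent :=
    SimpleGraph.ConnectedComponent.map (SimpleGraph.Hom.ofLE hle)
  let B := (graphOn F).connectedComponentMk (Sum.inr b)
  let ψ : (graphOn F).ConnectedComponent → Gi.ConnectedComponent ⊕ Unit :=
    fun c => if c = B then Sum.inr () else Sum.inl (φ c)
  have hinj : Function.Injective ψ := by
    intro c₁ c₂ hψ
    by_cases h1 : c₁ = B <;> by_cases h2 : c₂ = B
    · rw [h1, h2]
    · simp [ψ, h1, h2] at hψ
    · simp [ψ, h1, h2] at hψ
    · simp only [ψ, if_neg h1, if_neg h2, Sum.inl.injEq] at hψ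
      -- φ c₁ = φ c₂, c₁ ≠ B, c₂ ≠ B
      obtain ⟨v, rfl⟩ := c₁.exists_rep
      obtain ⟨w, rfl⟩ := c₂.exists_rep
      have hvw : Gi.Reachable v w := by
        have : Gi.connectedComponentMk v = Gi.connectedComponentMk w := hψ
        exact (SimpleGraph.ConnectedComponent.eq).mp this
      rcases reach_insert F a b hvw with hr | ⟨hv, hw⟩
      · exact SimpleGraph.ConnectedComponent.sound hr
      · rcases hv with hva | hvb
        · rcases hw with hwa | hwb
          · exact SimpleGraph.ConnectedComponent.sound (hva.trans hwa.symm)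
          · exact absurd (SimpleGraph.ConnectedComponent.sound hwb) h2
        · exact absurd (SimpleGraph.ConnectedComponent.sound hvb) h1
  calc numComponents F ≤ Nat.card (Gi.ConnectedComponent ⊕ Unit) :=
        Nat.card_le_card_of_injective ψ hinj
    _ = numComponents (insert (a, b) F) + 1 := by
        rw [Nat.card_sum]; simp [numComponents, hGi]

lemma numComponents_mono {n : ℕ} {F F' : Finset (Edge n)} (h : F ⊆ F') :
    numComponents F' ≤ numComponents F := by
  apply Nat.card_le_card_of_surjective
    (SimpleGraph.ConnectedComponent.map (SimpleGraph.Hom.ofLE (graphOn_mono h)))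
  intro c
  obtain ⟨v, rfl⟩ := c.exists_rep
  exact ⟨(graphOn F).connectedComponentMk v, rfl⟩

/-- If the endpoints are already connected, adding the edge keeps the component count. -/
lemma numComponents_insert_eq {n : ℕ} (F : Finset (Edge n)) (a b : Fin n)
    (hr : (graphOn F).Reachable (Sum.inl a) (Sum.inr b)) :
    numComponents (insert (a, b) F) = numComponents F := by
  have hle : graphOn F ≤ graphOn (insert (a, b) F) := graphOn_mono (Finset.subset_insert _ _)
  let φ : (graphOn F).ConnectedComponent → (graphOn (insert (a, b) F)).ConnectedComponent :=
    SimpleGraph.ConnectedComponent.map (SimpleGraph.Hom.ofLE hle)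
  have hinj : Function.Injective φ := by
    intro c₁ c₂ hψ
    obtain ⟨v, rfl⟩ := c₁.exists_rep
    obtain ⟨w, rfl⟩ := c₂.exists_rep
    have hvw : (graphOn (insert (a, b) F)).Reachable v w :=
      (SimpleGraph.ConnectedComponent.eq).mp hψ
    rcases reach_insert F a b hvw with hrvw | ⟨hv, hw⟩
    · exact SimpleGraph.ConnectedComponent.sound hrvw
    · have hv' : (graphOn F).Reachable v (Sum.inl a) := by
        rcases hv with h' | h'
        · exact h'
        · exact h'.trans hr.symm
      have hw' : (graphOn F).Reachable w (Sum.inl a) := by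
        rcases hw with h' | h'
        · exact h'
        · exact h'.trans hr.symm
      exact SimpleGraph.ConnectedComponent.sound (hv'.trans hw'.symm)
  exact le_antisymm (numComponents_mono (Finset.subset_insert _ _))
    (Nat.card_le_card_of_injective φ hinj)

/-- Monotonicity of `|E| + c`. -/
lemma card_add_comp_mono {n : ℕ} : ∀ (F' F : Finset (Edge n)), F ⊆ F' →
    F.card + numComponents F ≤ F'.card + numComponents F' := by
  intro F'
  induction F' using Finset.strongInduction with
  | _ F' ih =>
    intro F hFF'
    rcases eq_or_ssubset_of_subset hFF' with rfl | hss
    · exact le_rfl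
    obtain ⟨e, heF', heF⟩ := Finset.exists_of_ssubset hss
    obtain ⟨a, b⟩ := e
    have herase : F ⊆ F'.erase (a, b) := fun x hx =>
      Finset.mem_erase.mpr ⟨fun h => heF (h ▸ hx), hFF' hx⟩
    have h1 : F.card + numComponents F ≤
        (F'.erase (a, b)).card + numComponents (F'.erase (a, b)) :=
      ih _ (Finset.erase_ssubset heF') F herase
    have h2 : numComponents (F'.erase (a, b)) ≤ numComponents F' + 1 := by
      have := numComponents_le_insert (F'.erase (a, b)) a b
      rwa [Finset.insert_erase heF'] at this
    have hpos : 1 ≤ F'.card := Finset.card_pos.mpr ⟨_, heF'⟩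
    have h3 : (F'.erase (a, b)).card + 1 = F'.card := by
      rw [Finset.card_erase_of_mem heF']; omega
    omega


/-- Alternating-cycle connectivity: if `F` contains all matching edges `(x, σ x)` for
`x ≠ a` and all matching edges `(y, τ y)`, then `inl a` and `inr (σ a)` are connected. -/
lemma reach_alt {n : ℕ} (F : Finset (Edge n)) (σ τ : Equiv.Perm (Fin n)) (a : Fin n)
    (h1 : ∀ x, x ≠ a → (x, σ x) ∈ F) (h2 : ∀ y, (y, τ y) ∈ F) :
    (graphOn F).Reachable (Sum.inl a) (Sum.inr (σ a)) := by
  set h : Equiv.Perm (Fin n) := τ⁻¹ * σ with hh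
  -- single step
  have step : ∀ x : Fin n, x ≠ a →
      (graphOn F).Reachable (Sum.inl x) (Sum.inl (h x)) := by
    intro x hx
    have e1 : (graphOn F).Adj (Sum.inl x) (Sum.inr (σ x)) :=
      (graphOn_adj' F x (σ x)).mpr (h1 x hx)
    have e2 : (graphOn F).Adj (Sum.inl (h x)) (Sum.inr (σ x)) := by
      have := (graphOn_adj' F (h x) (τ (h x))).mpr (h2 (h x))
      have hτ : τ (h x) = σ x := by
        simp [hh, Equiv.Perm.mul_apply]
      rwa [hτ] at this
    exact e1.reachable.trans e2.symm.reachable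
  have hstart : (graphOn F).Reachable (Sum.inr (σ a)) (Sum.inl (h a)) := by
    have := (graphOn_adj' F (h a) (τ (h a))).mpr (h2 (h a))
    have hτ : τ (h a) = σ a := by simp [hh, Equiv.Perm.mul_apply]
    rw [hτ] at this
    exact this.symm.reachable
  -- orbit of a under h returns to a
  have hex : ∃ m, 0 < m ∧ (h ^ m) a = a :=
    ⟨orderOf h, orderOf_pos h, by rw [pow_orderOf_eq_one]; rfl⟩
  set m := Nat.find hex with hm
  obtain ⟨hmpos, hma⟩ := Nat.find_spec hex
  have key : ∀ k, k < m → (graphOn F).Reachable (Sum.inl ((h ^ (m - k)) a)) (Sum.inl a) := by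
    intro k
    induction k with
    | zero =>
      intro _
      simp only [Nat.sub_zero]
      rw [hma]
    | succ k ih =>
      intro hk
      have hk' : k < m := Nat.lt_of_succ_lt hk
      set j := m - (k + 1) with hj
      have hj1 : 1 ≤ j := by omega
      have hjm : j < m := by omega
      have hne : (h ^ j) a ≠ a := by
        intro hcon
        exact absurd (Nat.find_min hex hjm ⟨by omega, hcon⟩) (by simp)
      have hstep := step _ hne
      have hpow : h ((h ^ j) a) = (h ^ (m - k)) a := by
        rw [← Equiv.Perm.mul_apply, ← pow_succ']
        congr 2
        omega
      rw [hpow] at hstep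
      exact hstep.trans (ih hk')
  have hlast : (graphOn F).Reachable (Sum.inl ((h ^ 1) a)) (Sum.inl a) := by
    have := key (m - 1) (by omega)
    have h1m : m - (m - 1) = 1 := by omega
    rwa [h1m] at this
  rw [pow_one] at hlast
  exact (hstart.trans hlast).symm

/-- if `G` is elementary and `H` is a matching-covered (spanning) subgraph of
`G` with `H ≠ G`, then `χ(H) < χ(G)`. -/
theorem stmt7 (n : ℕ) (G H : Finset (Edge n))
    (hG : elementary G) (hH : matchingCovered H) (hsub : H ⊆ G) (hne : H ≠ G) :
    cyclo H < cyclo G := by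
  obtain ⟨⟨S, -, hSPM, hSsup⟩, -⟩ := hG
  obtain ⟨S', hS'ne, hS'PM, hS'sup⟩ := hH
  -- pick an edge of G not in H
  obtain ⟨e, heG, heH⟩ := Finset.exists_of_ssubset (hsub.ssubset_of_ne hne)
  -- a perfect matching of G containing e
  have heG' : e ∈ S.sup id := hSsup ▸ heG
  obtain ⟨M, hMS, heM⟩ := Finset.mem_sup.mp heG'
  obtain ⟨σ, rfl⟩ := hSPM M hMS
  simp only [id] at heM
  obtain ⟨a, -, rfl⟩ := Finset.mem_image.mp heM
  have hMG : (Finset.univ.image fun i => (i, σ i)) ⊆ G := by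
    rw [← hSsup]; exact Finset.le_sup (f := id) hMS
  -- a perfect matching of H
  obtain ⟨M', hM'S'⟩ := hS'ne
  obtain ⟨τ, rfl⟩ := hS'PM M' hM'S'
  have hM'H : (Finset.univ.image fun i => (i, τ i)) ⊆ H := by
    rw [← hS'sup]; exact Finset.le_sup (f := id) hM'S'
  set G' := G.erase (a, σ a) with hG'def
  have hmemM : ∀ x : Fin n, (x, σ x) ∈ G :=
    fun x => hMG (Finset.mem_image.mpr ⟨x, Finset.mem_univ x, rfl⟩)
  have hmemM' : ∀ y : Fin n, (y, τ y) ∈ H :=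
    fun y => hM'H (Finset.mem_image.mpr ⟨y, Finset.mem_univ y, rfl⟩)
  have h1 : ∀ x, x ≠ a → (x, σ x) ∈ G' := by
    intro x hx
    refine Finset.mem_erase.mpr ⟨?_, hmemM x⟩
    intro hc
    exact hx (by rw [Prod.ext_iff] at hc; exact hc.1)
  have h2 : ∀ y, (y, τ y) ∈ G' := by
    intro y
    refine Finset.mem_erase.mpr ⟨?_, hsub (hmemM' y)⟩
    intro hc
    exact heH (hc ▸ hmemM' y)
  have hreach := reach_alt G' σ τ a h1 h2
  have hcomp : numComponents G = numComponents G' := by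
    have := numComponents_insert_eq G' a (σ a) hreach
    rwa [hG'def, Finset.insert_erase heG] at this
  have hHsubG' : H ⊆ G' := by
    intro x hx
    refine Finset.mem_erase.mpr ⟨?_, hsub hx⟩
    intro hc
    exact heH (hc ▸ hx)
  have hmono := card_add_comp_mono G' H hHsubG'
  have hGpos : 1 ≤ G.card := Finset.card_pos.mpr ⟨_, heG⟩
  have hcard : G'.card + 1 = G.card := by
    rw [hG'def, Finset.card_erase_of_mem heG]; omega
  have hkey : H.card + numComponents H < G.card + numComponents G := by omega
  simp only [cyclo]
  omega
end

section
/- Let G ⊆ K_{n,n} be matching-covered and not itself a perfect matching. Then there exists a matching-covered graph H ⊆ G with χ(H) = χ(G) − 1. -/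
open Finset
open scoped Classical

/-!
Take `H ⊊ G` matching-covered and maximal; `χ(H) = χ(G) - 1` amounts to
`c(H) + 1 = c(G) + |G \ H|` for the numbers of components.

`≤`: an edge `(a, σ a) ∈ G \ H` of a perfect matching `σ ⊆ G` lies on an alternating cycle with a
perfect matching `τ ⊆ H`, so deleting it keeps the components of `G`; each further deletion adds at
most one component.

`≥`: by maximality, a perfect matching of `G` meeting `G \ H` contains all of it (otherwise its
union with `H` lies strictly between). Hence `G \ H ⊆ σ` and, switching `τ` to `σ` along a single
cycle of `τ⁻¹ * σ`, all left ends of `G \ H` lie on one such cycle, so they are joined in `G`. They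
lie in distinct components of `H`: otherwise, cut the cycle short between two of them in the same
component `W`, closing it up inside `W` by Hall's theorem (`W` minus a vertex on each side still
has a perfect matching); this gives a perfect matching of `G` through one edge of `G \ H` but not
another.
-/

namespace SimpleGraph

variable {V : Type*} {G G' : SimpleGraph V} {u v : V}

lemma Reachable.of_le_sup_edge (hG : G ≤ G' ⊔ edge u v) {x y : V} (h : G.Reachable x y) :
    G'.Reachable x y ∨ (G'.Reachable x u ∧ G'.Reachable v y) ∨
      (G'.Reachable x v ∧ G'.Reachable u y) := by
  obtain ⟨w⟩ := h
  induction w with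
  | nil => exact .inl .rfl
  | @cons x z y hxz _ ih =>
    rcases hG hxz with hxz' | hxz'
    · have := hxz'.reachable
      rcases ih with h | ⟨h₁, h₂⟩ | ⟨h₁, h₂⟩
      · exact .inl (this.trans h)
      · exact .inr (.inl ⟨this.trans h₁, h₂⟩)
      · exact .inr (.inr ⟨this.trans h₁, h₂⟩)
    · rw [edge_adj] at hxz'
      obtain ⟨⟨rfl, rfl⟩ | ⟨rfl, rfl⟩, -⟩ := hxz' <;>
        rcases ih with h | ⟨h₁, h₂⟩ | ⟨h₁, h₂⟩
      · exact .inr (.inl ⟨.rfl, h⟩)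
      · exact .inl (h₁.symm.trans h₂)
      · exact .inl h₂
      · exact .inr (.inr ⟨.rfl, h⟩)
      · exact .inl h₂
      · exact .inl (h₁.symm.trans h₂)

lemma ConnectedComponent.eq_or_of_map_ofLE_eq (hle : G' ≤ G) (hG : G ≤ G' ⊔ edge u v)
    {c d : G'.ConnectedComponent} (h : c.map (Hom.ofLE hle) = d.map (Hom.ofLE hle)) :
    c = d ∨ (c = G'.connectedComponentMk u ∧ d = G'.connectedComponentMk v) ∨
      (c = G'.connectedComponentMk v ∧ d = G'.connectedComponentMk u) := by
  induction c, d using ConnectedComponent.ind₂ with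
  | h x y =>
    simp only [ConnectedComponent.map_mk, ConnectedComponent.eq] at h ⊢
    rcases h.of_le_sup_edge hG with h | ⟨h₁, h₂⟩ | ⟨h₁, h₂⟩
    · exact .inl h
    · exact .inr (.inl ⟨h₁, h₂.symm⟩)
    · exact .inr (.inr ⟨h₁, h₂.symm⟩)

variable [Finite V]

lemma card_connectedComponent_le_add_one (hle : G' ≤ G) (hG : G ≤ G' ⊔ edge u v) :
    Nat.card G'.ConnectedComponent ≤ Nat.card G.ConnectedComponent + 1 := by
  have := Fintype.ofFinite G'.ConnectedComponent
  have := Fintype.ofFinite G.ConnectedComponent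
  have hinj : Set.InjOn (ConnectedComponent.map (Hom.ofLE hle))
      ↑(univ.erase (G'.connectedComponentMk v)) := by
    intro c hc d hd h
    simp only [coe_erase, coe_univ, Set.mem_sdiff, Set.mem_univ, Set.mem_singleton_iff,
      true_and] at hc hd
    rcases ConnectedComponent.eq_or_of_map_ofLE_eq hle hG h with h | h | h
    exacts [h, absurd h.2 hd, absurd h.1 hc]
  have := card_le_card_of_injOn _ (fun _ _ => mem_univ _) hinj
  rw [card_erase_of_mem (mem_univ _), card_univ, card_univ] at this
  simp only [Nat.card_eq_fintype_card]
  omega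

lemma card_connectedComponent_le_of_reachable (hle : G' ≤ G) (hG : G ≤ G' ⊔ edge u v)
    (huv : G'.Reachable u v) :
    Nat.card G'.ConnectedComponent ≤ Nat.card G.ConnectedComponent := by
  refine Nat.card_le_card_of_injective (ConnectedComponent.map (Hom.ofLE hle)) fun c d h => ?_
  have huv' : G'.connectedComponentMk u = G'.connectedComponentMk v :=
    ConnectedComponent.sound huv
  rcases ConnectedComponent.eq_or_of_map_ofLE_eq hle hG h with h | ⟨rfl, rfl⟩ | ⟨rfl, rfl⟩
  exacts [h, huv', huv'.symm]

/-- The component of `A` in `G` splits into at least `#A` components of `G'`. -/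
lemma card_connectedComponent_add_card_le (hle : G' ≤ G) (A : Finset V)
    (hG : ∀ a ∈ A, ∀ b ∈ A, G.Reachable a b)
    (hG' : ∀ a ∈ A, ∀ b ∈ A, a ≠ b → ¬ G'.Reachable a b) :
    Nat.card G.ConnectedComponent + #A ≤ Nat.card G'.ConnectedComponent + 1 := by
  have := Fintype.ofFinite G'.ConnectedComponent
  have := Fintype.ofFinite G.ConnectedComponent
  rcases A.eq_empty_or_nonempty with rfl | ⟨a₀, ha₀⟩
  · simpa using (ConnectedComponent.card_le_card_of_le hle).trans (Nat.le_succ _)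
  set F := ConnectedComponent.map (Hom.ofLE hle)
  have hF : Function.Surjective F := ConnectedComponent.surjective_map_ofLE hle
  have hfib : ∀ c, 1 ≤ #{d | F d = c} := fun c =>
    have ⟨d, hd⟩ := hF c
    card_pos.mpr ⟨d, by simpa using hd⟩
  have hfib₀ : #A ≤ #{d | F d = G.connectedComponentMk a₀} := by
    refine card_le_card_of_injOn G'.connectedComponentMk (fun a ha => ?_) fun a ha b hb h => ?_
    · simpa [F] using ConnectedComponent.sound (hG a ha a₀ ha₀)
    · by_contra hab
      exact hG' a ha b hb hab (ConnectedComponent.exact h)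
  have hsum := card_eq_sum_card_fiberwise (s := univ) (t := univ) (f := F) fun _ _ => mem_univ _
  rw [← add_sum_erase _ _ (mem_univ (G.connectedComponentMk a₀)), card_univ] at hsum
  have hrest := card_nsmul_le_sum (univ.erase (G.connectedComponentMk a₀)) _ 1 fun c _ => hfib c
  rw [smul_eq_mul, mul_one, card_erase_of_mem (mem_univ _), card_univ] at hrest
  have : 0 < Fintype.card G.ConnectedComponent :=
    Fintype.card_pos_iff.mpr ⟨G.connectedComponentMk a₀⟩
  simp only [Nat.card_eq_fintype_card]
  omega

end SimpleGraph

/-- The hypotheses say that the images of `S`, `L \ S` and the rest under `σ`, `μ` and `τ` are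
disjoint. -/
lemma Equiv.Perm.exists_eq_piecewise {α : Type*} [Finite α] (σ τ : Equiv.Perm α) (μ : α → α)
    (S L : Set α) (y : α) (hμ : Set.InjOn μ (L \ S)) (hμL : ∀ i ∈ L \ S, μ i ∈ τ '' L ∧ μ i ≠ y)
    (hσS : ∀ s ∈ S, σ s ∈ τ '' L → σ s = y) (hS : ∀ s ∈ S, τ⁻¹ (σ s) ∈ S ∪ L) :
    ∃ ξ : Equiv.Perm α, ∀ i, ξ i = if i ∈ S then σ i else if i ∈ L then μ i else τ i := by
  set g : α → α := fun i => if i ∈ S then σ i else if i ∈ L then μ i else τ i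
  have hSL : ∀ i j, i ∈ S → j ∉ S → g i ≠ g j := by
    intro i j hi hj h
    simp only [g, if_pos hi, if_neg hj] at h
    split_ifs at h with hjL
    · exact (hμL j ⟨hjL, hj⟩).2 (hσS i hi (h ▸ (hμL j ⟨hjL, hj⟩).1) ▸ h.symm)
    · rcases hS i hi with h' | h' <;> rw [h, Equiv.Perm.coe_inv, Equiv.symm_apply_apply] at h'
      exacts [hj h', hjL h']
  have hL : ∀ i j, i ∈ L \ S → j ∉ S ∪ L → g i ≠ g j := by
    intro i j hi hj h
    rw [Set.mem_union, not_or] at hj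
    simp only [g, if_neg hi.2, if_pos hi.1, if_neg hj.1, if_neg hj.2] at h
    obtain ⟨l, hl, hμl⟩ := (hμL i hi).1
    exact hj.2 (τ.injective (hμl.trans h) ▸ hl)
  have hg : Function.Injective g := by
    intro i j h
    by_cases hi : i ∈ S <;> by_cases hj : j ∈ S
    · simpa [g, hi, hj] using h
    · exact absurd h (hSL i j hi hj)
    · exact absurd h.symm (hSL j i hj hi)
    by_cases hi' : i ∈ L <;> by_cases hj' : j ∈ L
    · simp only [g, if_neg hi, if_neg hj, if_pos hi', if_pos hj'] at h
      exact hμ ⟨hi', hi⟩ ⟨hj', hj⟩ h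
    · exact absurd h (hL i j ⟨hi', hi⟩ (by simp [hj, hj']))
    · exact absurd h.symm (hL j i ⟨hj', hj⟩ (by simp [hi, hi']))
    · simpa [g, hi, hj, hi', hj'] using h
  exact ⟨Equiv.ofBijective g (Finite.injective_iff_bijective.mp hg), fun _ => rfl⟩

open SimpleGraph Sum

section GraphOn

variable {n : ℕ} {G H : Finset (Edge n)}

lemma graphOn_adj_inl_inr {a b : Fin n} : (graphOn G).Adj (inl a) (inr b) ↔ (a, b) ∈ G := by
  simp [graphOn]

lemma reachable_of_mem {a b : Fin n} (h : (a, b) ∈ G) :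
    (graphOn G).Reachable (inl a) (inr b) :=
  (graphOn_adj_inl_inr.mpr h).reachable

lemma exists_mem_of_graphOn_adj {p q : Fin n ⊕ Fin n} (h : (graphOn G).Adj p q) :
    ∃ i j, (i, j) ∈ G ∧ (p = inl i ∧ q = inr j ∨ p = inr j ∧ q = inl i) := by
  simp only [graphOn, fromRel_adj] at h
  rcases h.2 with ⟨e, he, rfl, rfl⟩ | ⟨e, he, rfl, rfl⟩
  exacts [⟨e.1, e.2, he, .inl ⟨rfl, rfl⟩⟩, ⟨e.1, e.2, he, .inr ⟨rfl, rfl⟩⟩]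

lemma graphOn_mono_s8 (h : H ⊆ G) : graphOn H ≤ graphOn G := fun p q hpq => by
  obtain ⟨i, j, hij, ⟨rfl, rfl⟩ | ⟨rfl, rfl⟩⟩ := exists_mem_of_graphOn_adj hpq
  exacts [graphOn_adj_inl_inr.mpr (h hij), (graphOn_adj_inl_inr.mpr (h hij)).symm]

lemma graphOn_le_erase_sup_edge (e : Edge n) :
    graphOn G ≤ graphOn (G.erase e) ⊔ edge (inl e.1) (inr e.2) := fun p q hpq => by
  obtain ⟨i, j, hij, ⟨rfl, rfl⟩ | ⟨rfl, rfl⟩⟩ := exists_mem_of_graphOn_adj hpq <;>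
  by_cases hije : (i, j) = e
  · subst hije; exact .inr (by simp [edge_adj])
  · exact .inl (graphOn_adj_inl_inr.mpr (mem_erase.mpr ⟨hije, hij⟩))
  · subst hije; exact .inr (by simp [edge_adj])
  · exact .inl (graphOn_adj_inl_inr.mpr (mem_erase.mpr ⟨hije, hij⟩)).symm

lemma numComponents_le_add_card_sdiff (h : H ⊆ G) :
    numComponents H ≤ numComponents G + #(G \ H) := by
  suffices ∀ D : Finset (Edge n), Disjoint H D → numComponents H ≤ numComponents (H ∪ D) + #D by
    simpa [union_sdiff_of_subset h] using this (G \ H) disjoint_sdiff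
  intro D
  induction D using Finset.induction_on with
  | empty => simp
  | insert e D he ih =>
    intro hHD
    have heHD : e ∉ H ∪ D := by
      simp [he, (disjoint_insert_right.mp hHD).1]
    have hle := card_connectedComponent_le_add_one (graphOn_mono_s8 (erase_subset e _))
      (graphOn_le_erase_sup_edge (G := insert e (H ∪ D)) e)
    rw [erase_insert heHD] at hle
    rw [union_insert, card_insert_of_notMem he]
    have := ih (disjoint_insert_right.mp hHD).2
    unfold numComponents at this ⊢
    omega

lemma numComponents_erase_le_of_reachable {e : Edge n}
    (h : (graphOn (G.erase e)).Reachable (inl e.1) (inr e.2)) :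
    numComponents (G.erase e) ≤ numComponents G :=
  card_connectedComponent_le_of_reachable (graphOn_mono_s8 (erase_subset e _))
    (graphOn_le_erase_sup_edge e) h

end GraphOn

section PerfectMatching

variable {n : ℕ} {G H : Finset (Edge n)} {σ τ : Equiv.Perm (Fin n)}

def pm (σ : Equiv.Perm (Fin n)) : Finset (Edge n) :=
  univ.image fun i => (i, σ i)

@[simp]
lemma mem_pm {e : Edge n} : e ∈ pm σ ↔ σ e.1 = e.2 := by
  obtain ⟨i, j⟩ := e
  simp [pm, eq_comm]

lemma pm_subset_iff : pm σ ⊆ G ↔ ∀ i, (i, σ i) ∈ G := by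
  refine ⟨fun h i => h (by simp), fun h e he => ?_⟩
  obtain ⟨i, j⟩ := e
  obtain rfl : σ i = j := mem_pm.mp he
  exact h i

lemma isPM_pm (σ : Equiv.Perm (Fin n)) : isPM (pm σ) := ⟨σ, rfl⟩

lemma matchingCovered_iff : matchingCovered G ↔
    (∃ σ, pm σ ⊆ G) ∧ ∀ e ∈ G, ∃ σ, pm σ ⊆ G ∧ e ∈ pm σ := by
  constructor
  · rintro ⟨S, ⟨M₀, hM₀⟩, hS, rfl⟩
    obtain ⟨σ₀, rfl⟩ := hS M₀ hM₀
    refine ⟨⟨σ₀, le_sup (f := id) hM₀⟩, fun e he => ?_⟩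
    obtain ⟨M, hM, heM⟩ := mem_sup.mp he
    obtain ⟨σ, rfl⟩ := hS M hM
    exact ⟨σ, le_sup (f := id) hM, heM⟩
  · rintro ⟨⟨σ₀, hσ₀⟩, hcov⟩
    refine ⟨(univ.filter fun σ => pm σ ⊆ G).image pm,
      ⟨pm σ₀, mem_image_of_mem _ (by simpa using hσ₀)⟩, by simpa using fun σ _ => isPM_pm σ, ?_⟩
    refine (Finset.sup_le fun M hM => ?_).antisymm fun e he => ?_
    · obtain ⟨σ, hσ, rfl⟩ := by simpa using hM
      exact hσ
    · obtain ⟨σ, hσ, heσ⟩ := hcov e he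
      exact mem_sup.mpr ⟨pm σ, mem_image_of_mem _ (by simpa using hσ), heσ⟩

lemma matchingCovered_pm (σ : Equiv.Perm (Fin n)) : matchingCovered (pm σ) :=
  matchingCovered_iff.mpr ⟨⟨σ, subset_rfl⟩, fun _ he => ⟨σ, subset_rfl, he⟩⟩

lemma matchingCovered.union_pm (hH : matchingCovered H) (σ : Equiv.Perm (Fin n)) :
    matchingCovered (H ∪ pm σ) := by
  obtain ⟨-, hcov⟩ := matchingCovered_iff.mp hH
  refine matchingCovered_iff.mpr ⟨⟨σ, subset_union_right⟩, fun e he => ?_⟩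
  rcases mem_union.mp he with he | he
  · obtain ⟨ν, hν, heν⟩ := hcov e he
    exact ⟨ν, hν.trans subset_union_left, heν⟩
  · exact ⟨σ, subset_union_right, he⟩

end PerfectMatching

section AlternatingCycle

variable {n : ℕ} {G H : Finset (Edge n)} {σ τ : Equiv.Perm (Fin n)}

lemma apply_pow_succ_inv_mul (σ τ : Equiv.Perm (Fin n)) (a : Fin n) (l : ℕ) :
    τ (((τ⁻¹ * σ) ^ (l + 1)) a) = σ (((τ⁻¹ * σ) ^ l) a) := by
  simp [pow_succ', Equiv.Perm.mul_apply]

lemma reachable_inr_pow_succ (hτ : pm τ ⊆ H) (a : Fin n) (l : ℕ) :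
    (graphOn H).Reachable (inr (σ (((τ⁻¹ * σ) ^ l) a))) (inl (((τ⁻¹ * σ) ^ (l + 1)) a)) := by
  rw [← apply_pow_succ_inv_mul]
  exact (reachable_of_mem (pm_subset_iff.mp hτ _)).symm

lemma reachable_pow_of_mem (hτ : pm τ ⊆ H) (a : Fin n) {l₀ l : ℕ} (hl : l₀ ≤ l)
    (hσ : ∀ j, l₀ ≤ j → j < l → (((τ⁻¹ * σ) ^ j) a, σ (((τ⁻¹ * σ) ^ j) a)) ∈ H) :
    (graphOn H).Reachable (inl (((τ⁻¹ * σ) ^ l₀) a)) (inl (((τ⁻¹ * σ) ^ l) a)) := by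
  induction l, hl using Nat.le_induction with
  | base => rfl
  | succ l hl ih =>
    refine (ih fun j hj hjl => hσ j hj (by omega)).trans ?_
    exact (reachable_of_mem (hσ l hl (by omega))).trans (reachable_inr_pow_succ hτ a l)

/-- The rest of the alternating cycle of `σ` and `τ` through `a` joins the ends of `(a, σ a)`. -/
lemma reachable_erase_of_ne (hσ : pm σ ⊆ G) (hτ : pm τ ⊆ G) {a : Fin n} (h : τ a ≠ σ a) :
    (graphOn (G.erase (a, σ a))).Reachable (inl a) (inr (σ a)) := by
  have hret : ∃ k, 0 < k ∧ ((τ⁻¹ * σ) ^ k) a = a :=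
    ⟨orderOf (τ⁻¹ * σ), orderOf_pos _, by rw [pow_orderOf_eq_one]; rfl⟩
  obtain ⟨hk, hka⟩ := Nat.find_spec hret
  have hτ' : pm τ ⊆ G.erase (a, σ a) := pm_subset_iff.mpr fun i => mem_erase.mpr
    ⟨fun hi => h (by obtain ⟨rfl, hi⟩ := Prod.ext_iff.mp hi; exact hi), pm_subset_iff.mp hτ i⟩
  have hcycle := reachable_pow_of_mem (σ := σ) hτ' a (Nat.one_le_of_lt hk) fun j hj hjk =>
    mem_erase.mpr ⟨fun hja => Nat.find_min hret hjk ⟨hj, congrArg Prod.fst hja⟩,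
      pm_subset_iff.mp hσ _⟩
  rw [hka] at hcycle
  simpa using ((reachable_inr_pow_succ hτ' a 0).trans hcycle).symm

lemma numComponents_add_one_le (hG : matchingCovered G) (hH : matchingCovered H)
    (hHG : H ⊆ G) (hne : H ≠ G) :
    numComponents H + 1 ≤ numComponents G + #(G \ H) := by
  obtain ⟨e, he⟩ := sdiff_nonempty.mpr fun hGsub => hne (hHG.antisymm hGsub)
  obtain ⟨heG, heH⟩ := mem_sdiff.mp he
  obtain ⟨σ, hσ, heσ⟩ := (matchingCovered_iff.mp hG).2 e heG
  obtain ⟨τ, hτ⟩ := (matchingCovered_iff.mp hH).1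
  obtain ⟨a, b⟩ := e
  obtain rfl : σ a = b := mem_pm.mp heσ
  have hτa : τ a ≠ σ a := fun h => heH (hτ (mem_pm.mpr h))
  have h₁ := numComponents_erase_le_of_reachable (reachable_erase_of_ne hσ (hτ.trans hHG) hτa)
  have h₂ := numComponents_le_add_card_sdiff (H := H) (G := G.erase (a, σ a))
    fun x hx => mem_erase.mpr ⟨fun hxe => heH (hxe ▸ hx), hHG hx⟩
  rw [erase_sdiff_comm, card_erase_of_mem he] at h₂
  have := card_pos.mpr ⟨_, he⟩
  omega

end AlternatingCycle

section Hall

variable {n : ℕ} {H : Finset (Edge n)}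

def nbhd (H : Finset (Edge n)) (s : Finset (Fin n)) : Finset (Fin n) :=
  {e ∈ H | e.1 ∈ s}.image Prod.snd

@[simp]
lemma mem_nbhd {s : Finset (Fin n)} {j : Fin n} : j ∈ nbhd H s ↔ ∃ i ∈ s, (i, j) ∈ H := by
  simp [nbhd, and_comm]

/-- Every perfect matching maps `s` onto `nbhd H s`, so an edge into `nbhd H s` comes from `s`. -/
lemma mem_of_mem_nbhd_of_card_le (hH : matchingCovered H) {s : Finset (Fin n)}
    (hs : #(nbhd H s) ≤ #s) {i j : Fin n} (hij : (i, j) ∈ H) (hj : j ∈ nbhd H s) : i ∈ s := by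
  obtain ⟨ν, hν, hijν⟩ := (matchingCovered_iff.mp hH).2 _ hij
  have himage : s.image ν = nbhd H s := by
    refine eq_of_subset_of_card_le (fun j hj => ?_) ?_
    · obtain ⟨i', hi', rfl⟩ := mem_image.mp hj
      exact mem_nbhd.mpr ⟨i', hi', pm_subset_iff.mp hν i'⟩
    · rwa [card_image_of_injective _ ν.injective]
  obtain ⟨i', hi', hν'⟩ := mem_image.mp (himage ▸ hj)
  rwa [ν.injective (hν'.trans (mem_pm.mp hijν).symm)] at hi'

lemma mem_of_reachable_of_card_nbhd_le (hH : matchingCovered H) {s : Finset (Fin n)}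
    (hs : #(nbhd H s) ≤ #s) {i x : Fin n} (hi : i ∈ s)
    (h : (graphOn H).Reachable (inl i) (inl x)) : x ∈ s := by
  let P : Fin n ⊕ Fin n → Prop := Sum.elim (· ∈ s) (· ∈ nbhd H s)
  have hP : ∀ p q, (graphOn H).Adj p q → P p → P q := fun p q hpq => by
    obtain ⟨i, j, hij, ⟨rfl, rfl⟩ | ⟨rfl, rfl⟩⟩ := exists_mem_of_graphOn_adj hpq
    exacts [fun hi => mem_nbhd.mpr ⟨i, hi, hij⟩, mem_of_mem_nbhd_of_card_le hH hs hij]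
  suffices ∀ p q, (graphOn H).Reachable p q → P p → P q from this _ _ h hi
  rintro p q ⟨w⟩
  induction w with
  | nil => exact id
  | cons hadj _ ih => exact fun h => ih (hP _ _ hadj h)

/-- Hall's condition holds: a set violating it has at most as many neighbours as elements, so by
`mem_of_reachable_of_card_nbhd_le` it would contain `x`. -/
lemma exists_injOn_of_matchingCovered (hH : matchingCovered H) (x y : Fin n) :
    ∃ μ : Fin n → Fin n, Set.InjOn μ {i | (graphOn H).Reachable (inl x) (inl i) ∧ i ≠ x} ∧
      ∀ i, (graphOn H).Reachable (inl x) (inl i) → i ≠ x → (i, μ i) ∈ H ∧ μ i ≠ y := by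
  let L := {i | (graphOn H).Reachable (inl x) (inl i) ∧ i ≠ x}
  let t : L → Finset (Fin n) := fun i => (nbhd H {i.1}).erase y
  have hall : ∀ s : Finset L, #s ≤ #(s.biUnion t) := by
    intro s
    have hst : s.biUnion t = (nbhd H (s.map (Function.Embedding.subtype _))).erase y := by
      ext j
      simp [t]
      tauto
    rw [hst, ← card_map (Function.Embedding.subtype _)]
    by_cases htight : #(nbhd H (s.map (Function.Embedding.subtype _))) ≤
      #(s.map (Function.Embedding.subtype _))
    · rcases s.eq_empty_or_nonempty with rfl | ⟨i, hi⟩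
      · simp
      have hx := mem_of_reachable_of_card_nbhd_le hH htight (mem_map_of_mem _ hi) i.2.1.symm
      obtain ⟨⟨i', _, hi'x⟩, _, h⟩ := mem_map.mp hx
      exact absurd h hi'x
    · have := pred_card_le_card_erase (s := nbhd H (s.map (Function.Embedding.subtype _))) (a := y)
      omega
  obtain ⟨f, hf, hft⟩ := (all_card_le_biUnion_card_iff_exists_injective t).mp hall
  refine ⟨fun i => if hi : i ∈ L then f ⟨i, hi⟩ else i, fun i hi i' hi' h => ?_, fun i hi hix => ?_⟩
  · simp only [L, dif_pos hi, dif_pos hi'] at h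
    exact congrArg Subtype.val (hf h)
  · have := hft ⟨i, hi, hix⟩
    simp only [t, mem_erase, mem_nbhd, mem_singleton, exists_eq_left] at this
    simpa [L, hi, hix] using this.symm

end Hall

section Shortcut

variable {n : ℕ} {G H : Finset (Edge n)} {σ τ : Equiv.Perm (Fin n)}

lemma reachable_inl_inv (hτ : pm τ ⊆ H) {p : Fin n ⊕ Fin n} {j : Fin n}
    (h : (graphOn H).Reachable p (inr j)) : (graphOn H).Reachable p (inl (τ⁻¹ j)) := by
  have := reachable_of_mem (pm_subset_iff.mp hτ (τ⁻¹ j))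
  simp only [Equiv.Perm.coe_inv, Equiv.apply_symm_apply] at this
  exact h.trans this.symm

/-- Cutting the alternating cycle short: `ξ` is `σ` on the segment `a, …, (τ⁻¹ * σ) ^ lp a`, which
leaves the component `W` of `inl a` right after `a` and returns at `(τ⁻¹ * σ) ^ (lp + 1) a`, then a
matching of `W` minus `a` and `σ ((τ⁻¹ * σ) ^ lp a)`, and `τ` elsewhere. -/
lemma exists_pm_of_segment (hH : matchingCovered H) (hHG : H ⊆ G) (hσ : pm σ ⊆ G)
    (hτ : pm τ ⊆ H) {a a' : Fin n} {lp : ℕ}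
    (hout : ∀ l, 0 < l → l ≤ lp → ¬ (graphOn H).Reachable (inl a) (inl (((τ⁻¹ * σ) ^ l) a)))
    (hback : (graphOn H).Reachable (inl a) (inl (((τ⁻¹ * σ) ^ (lp + 1)) a)))
    (ha' : (graphOn H).Reachable (inl a) (inl a')) (ha'S : ∀ l ≤ lp, ((τ⁻¹ * σ) ^ l) a ≠ a')
    (ha'H : (a', σ a') ∉ H) :
    ∃ ξ, pm ξ ⊆ G ∧ ξ a = σ a ∧ ξ a' ≠ σ a' := by
  set f := τ⁻¹ * σ
  set W := {i | (graphOn H).Reachable (inl a) (inl i)}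
  set S := {i | ∃ l ≤ lp, (f ^ l) a = i}
  have haS : a ∈ S := ⟨0, Nat.zero_le _, rfl⟩
  have hτf : ∀ l, τ⁻¹ (σ ((f ^ l) a)) = (f ^ (l + 1)) a := fun l => by
    rw [← apply_pow_succ_inv_mul σ τ a l]; simp [f]
  obtain ⟨μ, hμinj, hμ⟩ := exists_injOn_of_matchingCovered hH a (σ ((f ^ lp) a))
  have hμ' : ∀ i ∈ W \ S, (i, μ i) ∈ H ∧ μ i ≠ σ ((f ^ lp) a) := fun i hi =>
    hμ i hi.1 fun h => hi.2 (h ▸ haS)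
  have hμW : ∀ i ∈ W \ S, μ i ∈ τ '' W := fun i hi =>
    ⟨τ⁻¹ (μ i), reachable_inl_inv hτ (hi.1.trans (reachable_of_mem (hμ' i hi).1)), by simp⟩
  obtain ⟨ξ, hξ⟩ := Equiv.Perm.exists_eq_piecewise σ τ μ S W (σ ((f ^ lp) a))
    (hμinj.mono fun i hi => show i ∈ {i | _ ∧ i ≠ a} from ⟨hi.1, fun h => hi.2 (h ▸ haS)⟩)
    (fun i hi => ⟨hμW i hi, (hμ' i hi).2⟩)
    (by
      rintro _ ⟨l, hl, rfl⟩ ⟨w, hw, hwσ⟩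
      have hw' : w = (f ^ (l + 1)) a := by rw [← hτf, ← hwσ]; simp
      rcases hl.lt_or_eq with hl | rfl
      · exact absurd (hw' ▸ hw) (hout (l + 1) (Nat.succ_pos l) hl)
      · rfl)
    (by
      rintro _ ⟨l, hl, rfl⟩
      rw [hτf]
      rcases hl.lt_or_eq with hl | rfl
      exacts [.inl ⟨l + 1, hl, rfl⟩, .inr hback])
  have ha'S' : a' ∉ S := fun ⟨l, hl, h⟩ => ha'S l hl h
  refine ⟨ξ, pm_subset_iff.mpr fun i => ?_, by simp [hξ, haS], fun h => ?_⟩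
  · rw [hξ]
    split_ifs with hS hW
    · exact pm_subset_iff.mp hσ i
    · exact hHG (hμ' i ⟨hW, hS⟩).1
    · exact hHG (pm_subset_iff.mp hτ i)
  · rw [hξ, if_neg ha'S', if_pos (show a' ∈ W from ha')] at h
    exact ha'H (h ▸ (hμ' a' ⟨ha', ha'S'⟩).1)

/-- Walking on in `H` from `(τ⁻¹ * σ) ^ l a` reaches the next edge outside `H`, which `hmin`
excludes from the component of `inl a`. -/
lemma not_reachable_pow_of_le (hτ : pm τ ⊆ H) {a : Fin n} {lp t : ℕ} (hlp : lp < t)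
    (hlpH : (((τ⁻¹ * σ) ^ lp) a, σ (((τ⁻¹ * σ) ^ lp) a)) ∉ H)
    (hmin : ∀ l, 0 < l → l < t → (((τ⁻¹ * σ) ^ l) a, σ (((τ⁻¹ * σ) ^ l) a)) ∉ H →
      ¬ (graphOn H).Reachable (inl a) (inl (((τ⁻¹ * σ) ^ l) a)))
    {l : ℕ} (hl : 0 < l) (hllp : l ≤ lp) :
    ¬ (graphOn H).Reachable (inl a) (inl (((τ⁻¹ * σ) ^ l) a)) := by
  have hnext : ∃ j, l ≤ j ∧ j ≤ lp ∧ (((τ⁻¹ * σ) ^ j) a, σ (((τ⁻¹ * σ) ^ j) a)) ∉ H :=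
    ⟨lp, hllp, le_rfl, hlpH⟩
  obtain ⟨hlj, hjlp, hjH⟩ := Nat.find_spec hnext
  intro hr
  refine hmin _ (by omega) (by omega) hjH (hr.trans (reachable_pow_of_mem hτ a hlj ?_))
  intro j hj hjl
  by_contra hjH
  exact Nat.find_min hnext hjl ⟨hj, by omega, hjH⟩

end Shortcut

section Maximal

variable {n : ℕ} {G H : Finset (Edge n)} {σ τ : Equiv.Perm (Fin n)}

def AllOrNothing (G H : Finset (Edge n)) : Prop :=
  ∀ ξ, pm ξ ⊆ G → ∀ e ∈ G \ H, e ∈ pm ξ → G \ H ⊆ pm ξ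

lemma AllOrNothing.apply_eq (hGH : AllOrNothing G H) (hσ : pm σ ⊆ G) {ξ : Equiv.Perm (Fin n)}
    (hξ : pm ξ ⊆ G) {i i' : Fin n} (hi : (i, σ i) ∉ H) (hi' : (i', σ i') ∉ H) (h : ξ i = σ i) :
    ξ i' = σ i' :=
  mem_pm.mp <| hGH ξ hξ _ (mem_sdiff.mpr ⟨pm_subset_iff.mp hσ i, hi⟩) (mem_pm.mpr h)
    (mem_sdiff.mpr ⟨pm_subset_iff.mp hσ i', hi'⟩)

lemma AllOrNothing.sameCycle (hGH : AllOrNothing G H) (hHG : H ⊆ G) (hσ : pm σ ⊆ G)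
    (hτ : pm τ ⊆ H) {i i' : Fin n} (hi : (i, σ i) ∉ H) (hi' : (i', σ i') ∉ H) :
    (τ⁻¹ * σ).SameCycle i i' := by
  by_contra hii'
  -- switch from `τ` to `σ` along the cycle through `i` only
  set ξ := τ * (τ⁻¹ * σ).cycleOf i
  have hξ : ∀ j, ξ j = if (τ⁻¹ * σ).SameCycle i j then σ j else τ j := fun j => by
    simp only [ξ, Equiv.Perm.mul_apply, Equiv.Perm.cycleOf_apply]
    split_ifs <;> simp
  have hξG : pm ξ ⊆ G := pm_subset_iff.mpr fun j => by
    rw [hξ]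
    split_ifs
    exacts [pm_subset_iff.mp hσ j, hHG (pm_subset_iff.mp hτ j)]
  have := hGH.apply_eq hσ hξG hi hi' (by simp [hξ, Equiv.Perm.SameCycle.refl])
  rw [hξ, if_neg hii'] at this
  exact hi' (this ▸ pm_subset_iff.mp hτ i')

/-- Were two such left ends joined, take two, `a` and `(τ⁻¹ * σ) ^ t a`, in one component with `t`
minimal, and cut the cycle short (`exists_pm_of_segment`) at the last edge outside `H` before the
second: this gives a perfect matching of `G` through `(a, σ a)` avoiding the other edge. -/
lemma AllOrNothing.not_reachable (hGH : AllOrNothing G H) (hH : matchingCovered H) (hHG : H ⊆ G)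
    (hσ : pm σ ⊆ G) (hτ : pm τ ⊆ H)
    {b b' : Fin n} (hb : (b, σ b) ∉ H) (hb' : (b', σ b') ∉ H) (hbb' : b ≠ b') :
    ¬ (graphOn H).Reachable (inl b) (inl b') := by
  intro hr
  have hpair : ∃ t, 0 < t ∧ ∃ a a', (a, σ a) ∉ H ∧ (a', σ a') ∉ H ∧ a ≠ a' ∧
      (graphOn H).Reachable (inl a) (inl a') ∧ ((τ⁻¹ * σ) ^ t) a = a' := by
    obtain ⟨k, -, hk⟩ := (hGH.sameCycle hHG hσ hτ hb hb').exists_pow_eq'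
    exact ⟨k, Nat.pos_of_ne_zero fun h => hbb' (by simpa [h] using hk),
      b, b', hb, hb', hbb', hr, hk⟩
  obtain ⟨ht, a, a', ha, ha', haa', hr, rfl⟩ := Nat.find_spec hpair
  set t := Nat.find hpair
  have hmin : ∀ l, 0 < l → l < t → (((τ⁻¹ * σ) ^ l) a, σ (((τ⁻¹ * σ) ^ l) a)) ∉ H →
      ¬ (graphOn H).Reachable (inl a) (inl (((τ⁻¹ * σ) ^ l) a)) := by
    intro l hl hlt hlH hrl
    by_cases hla : ((τ⁻¹ * σ) ^ l) a = a
    · refine Nat.find_min hpair (show t - l < t by omega)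
        ⟨by omega, a, _, ha, ha', haa', hr, ?_⟩
      rw [← hla, ← Equiv.Perm.mul_apply, ← pow_add, Nat.sub_add_cancel hlt.le, hla]
    · exact Nat.find_min hpair hlt ⟨hl, a, _, ha, hlH, Ne.symm hla, hrl, rfl⟩
  set lp := Nat.findGreatest (fun l => (((τ⁻¹ * σ) ^ l) a, σ (((τ⁻¹ * σ) ^ l) a)) ∉ H) (t - 1)
  have hlpH : (((τ⁻¹ * σ) ^ lp) a, σ (((τ⁻¹ * σ) ^ lp) a)) ∉ H :=
    Nat.findGreatest_spec (P := fun l => (((τ⁻¹ * σ) ^ l) a, σ (((τ⁻¹ * σ) ^ l) a)) ∉ H)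
      (Nat.zero_le _) (by simpa using ha)
  have hlp : lp < t := (Nat.findGreatest_le _).trans_lt (Nat.sub_lt ht Nat.one_pos)
  have hback : (graphOn H).Reachable (inl a) (inl (((τ⁻¹ * σ) ^ (lp + 1)) a)) :=
    hr.trans (reachable_pow_of_mem hτ a hlp fun j hj hjt =>
      not_not.mp (Nat.findGreatest_is_greatest hj (by omega))).symm
  obtain ⟨ξ, hξG, hξa, hξa'⟩ := exists_pm_of_segment hH hHG hσ hτ
    (fun l hl hllp => not_reachable_pow_of_le hτ hlp hlpH hmin hl hllp) hback hr
    (fun l hl h => Nat.find_min hpair (show l < t by omega)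
      ⟨Nat.pos_of_ne_zero fun h0 => haa' (by simpa [h0] using h), a, _, ha, ha', haa', hr, h⟩) ha'
  exact hξa' (hGH.apply_eq hσ hξG ha ha' hξa)

lemma allOrNothing_of_maximal (hH : matchingCovered H) (hHG : H ⊆ G)
    (hmax : ∀ H', H ⊂ H' → H' ⊆ G → matchingCovered H' → H' = G) : AllOrNothing G H := by
  intro ξ hξ e he heξ
  have hGξ := hmax _ (ssubset_of_subset_of_ne subset_union_left fun h =>
    (mem_sdiff.mp he).2 (h ▸ mem_union_right H heξ)) (union_subset hHG hξ) (hH.union_pm ξ)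
  intro d hd
  obtain ⟨hdG, hdH⟩ := mem_sdiff.mp hd
  exact (mem_union.mp (hGξ ▸ hdG)).resolve_left hdH

lemma numComponents_add_card_sdiff_le (hG : matchingCovered G) (hH : matchingCovered H)
    (hHG : H ⊆ G) (hne : H ≠ G)
    (hmax : ∀ H', H ⊂ H' → H' ⊆ G → matchingCovered H' → H' = G) :
    numComponents G + #(G \ H) ≤ numComponents H + 1 := by
  obtain ⟨τ, hτ⟩ := (matchingCovered_iff.mp hH).1
  obtain ⟨e, he⟩ := sdiff_nonempty.mpr fun hGsub => hne (hHG.antisymm hGsub)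
  obtain ⟨σ, hσ, heσ⟩ := (matchingCovered_iff.mp hG).2 e (mem_sdiff.mp he).1
  have hGH := allOrNothing_of_maximal hH hHG hmax
  have hD : ∀ d ∈ G \ H, d = (d.1, σ d.1) ∧ (d.1, σ d.1) ∉ H := fun d hd => by
    have hd' : d = (d.1, σ d.1) := Prod.ext rfl (mem_pm.mp (hGH σ hσ e he heσ hd)).symm
    exact ⟨hd', hd' ▸ (mem_sdiff.mp hd).2⟩
  have := card_connectedComponent_add_card_le (graphOn_mono_s8 hHG)
    ((G \ H).image fun d => (inl d.1 : Fin n ⊕ Fin n)) ?_ ?_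
  · rwa [card_image_of_injOn fun d hd d' hd' h => by
      rw [(hD d hd).1, (hD d' hd').1, inl_injective h]] at this
  · simp only [mem_image]
    rintro _ ⟨d, hd, rfl⟩ _ ⟨d', hd', rfl⟩
    obtain ⟨k, -, hk⟩ := (hGH.sameCycle hHG hσ hτ (hD d hd).2 (hD d' hd').2).exists_pow_eq'
    simpa [hk] using reachable_pow_of_mem (σ := σ) (hτ.trans hHG) d.1 (Nat.zero_le k)
      fun j _ _ => pm_subset_iff.mp hσ _
  · simp only [mem_image]
    rintro _ ⟨d, hd, rfl⟩ _ ⟨d', hd', rfl⟩ hdd'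
    exact hGH.not_reachable hH hHG hσ hτ (hD d hd).2 (hD d' hd').2 fun h => hdd' (h ▸ rfl)

end Maximal

lemma exists_maximal_matchingCovered_ssubset {n : ℕ} {G : Finset (Edge n)}
    (hG : matchingCovered G) (hnpm : ¬ isPM G) :
    ∃ H ⊆ G, matchingCovered H ∧ H ≠ G ∧
      ∀ H', H ⊂ H' → H' ⊆ G → matchingCovered H' → H' = G := by
  obtain ⟨τ, hτ⟩ := (matchingCovered_iff.mp hG).1
  obtain ⟨H, hH, hmax⟩ := (G.powerset.filter fun H => matchingCovered H ∧ H ≠ G).exists_maximal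
    ⟨pm τ, mem_filter.mpr ⟨mem_powerset.mpr hτ, matchingCovered_pm τ,
      fun h => hnpm (h ▸ isPM_pm τ)⟩⟩
  obtain ⟨hHG, hH, hne⟩ := by simpa using hH
  refine ⟨H, hHG, hH, hne, fun H' hHH' hH'G hH' => by_contra fun hne' => ?_⟩
  exact hHH'.not_subset (hmax (by simp [hH'G, hH', hne']) hHH'.subset)

/-- if `G ⊆ K_{n,n}` is matching-covered and is not itself a perfect matching,
then there is a matching-covered `H ⊆ G` with `χ(H) = χ(G) − 1`. -/
theorem stmt8 (n : ℕ) (G : Finset (Edge n))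
    (hG : matchingCovered G) (hnpm : ¬ isPM G) :
    ∃ H ⊆ G, matchingCovered H ∧ cyclo H = cyclo G - 1 := by
  obtain ⟨H, hHG, hH, hne, hmax⟩ := exists_maximal_matchingCovered_ssubset hG hnpm
  refine ⟨H, hHG, hH, ?_⟩
  have h₁ := numComponents_add_one_le hG hH hHG hne
  have h₂ := numComponents_add_card_sdiff_le hG hH hHG hne hmax
  have h₃ := card_sdiff_add_card_eq_card hHG
  simp only [cyclo]
  omega
end

section
/- For every Boolean function f: {0,1}^n → {0,1}, the minimal depth of an AND decision tree computing f is at least log base 3 of the number of monomials with nonzero coefficient in the unique real multilinear polynomial representing f. -/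
open Finset
open scoped Classical

/-- Decision trees whose internal nodes query a Boolean function of a subset of the bits. -/
inductive QTree (E : Type) : Type where
  | leaf : Bool → QTree E
  | node : Finset E → QTree E → QTree E → QTree E

/-- Depth of a generalized decision tree. -/
def QTree.depth {E : Type} : QTree E → ℕ
  | .leaf _ => 0
  | .node _ t0 t1 => max (QTree.depth t0) (QTree.depth t1) + 1

/-- Evaluation of an AND decision tree: each internal node queries `AND_S(x) = ∧_{i∈S} x i`. -/
noncomputable def QTree.andEval {E : Type} : QTree E → (E → Bool) → Bool
  | .leaf b, _ => b
  | .node S t0 t1, x =>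
      if ∀ e ∈ S, x e = true then QTree.andEval t1 x else QTree.andEval t0 x

/-!
A tree of depth `d` computes a multilinear polynomial with at most `3 ^ d` monomials: at a node
querying `AND_S` the computed function is `[t₀] + AND_S * ([t₁] - [t₀])`, and multiplying by the
monomial `AND_S` maps monomials to monomials, so the number of monomials at most triples per level.
Since the monomials `AND_S` are linearly independent functions on `{0,1}^n`, this polynomial is
the given representation of `f`.
-/

theorem Finsupp.card_support_mapDomain_le {α β M : Type*} [AddCommMonoid M] (f : α → β)
    (c : α →₀ M) : (c.mapDomain f).support.card ≤ c.support.card :=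
  (card_le_card mapDomain_support).trans card_image_le

lemma Real.logb_natCast_le_of_le_pow {b : ℝ} (hb : 1 < b) {k d : ℕ} (h : (k : ℝ) ≤ b ^ d) :
    Real.logb b k ≤ d := by
  rcases k.eq_zero_or_pos with rfl | hk
  · simp
  · rwa [Real.logb_le_iff_le_rpow hb (by exact_mod_cast hk), Real.rpow_natCast]

section

variable {E : Type}

noncomputable def andMonomial (S : Finset E) (x : E → Bool) : ℝ :=
  ∏ i ∈ S, if x i then (1 : ℝ) else 0

lemma andMonomial_eq_ite (S : Finset E) (x : E → Bool) :
    andMonomial S x = if ∀ i ∈ S, x i = true then 1 else 0 :=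
  prod_boole

lemma andMonomial_union (S T : Finset E) :
    andMonomial (S ∪ T) = andMonomial S * andMonomial T := by
  ext x
  simp only [Pi.mul_apply, andMonomial_eq_ite, forall_mem_union, ite_zero_mul_ite_zero, mul_one]

lemma andMonomial_indicator (S T : Finset E) :
    andMonomial T (fun i => decide (i ∈ S)) = if T ⊆ S then 1 else 0 := by
  simp only [andMonomial_eq_ite, decide_eq_true_eq, subset_iff]

theorem linearIndependent_andMonomial : LinearIndependent ℝ (andMonomial (E := E)) := by
  rw [linearIndependent_iff']
  intro s g hg S
  induction S using Finset.strongInduction with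
  | _ S ih =>
    intro hS
    -- evaluating at the indicator of `S` kills every monomial not contained in `S`
    have hx := congrFun hg (fun i => decide (i ∈ S))
    simp only [Finset.sum_apply, Pi.smul_apply, smul_eq_mul, andMonomial_indicator,
      Pi.zero_apply] at hx
    rwa [sum_eq_single_of_mem S hS, if_pos subset_rfl, mul_one] at hx
    intro T hT hTS
    split_ifs with hsub
    · rw [ih T (ssubset_of_subset_of_ne hsub hTS) hT, zero_mul]
    · exact mul_zero _

lemma linearCombination_andMonomial_mapDomain_union (S : Finset E) (c : Finset E →₀ ℝ) :
    Finsupp.linearCombination ℝ andMonomial (c.mapDomain (S ∪ ·)) =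
      andMonomial S * Finsupp.linearCombination ℝ andMonomial c := by
  have : andMonomial ∘ (S ∪ ·) = LinearMap.mulLeft ℝ (andMonomial S) ∘ andMonomial :=
    funext (andMonomial_union S)
  rw [Finsupp.linearCombination_mapDomain, this, ← Finsupp.apply_linearCombination,
    LinearMap.mulLeft_apply]

lemma card_support_node_le (S : Finset E) (c₀ c₁ : Finset E →₀ ℝ) :
    (c₀ + (c₁ - c₀).mapDomain (S ∪ ·)).support.card ≤ 2 * c₀.support.card + c₁.support.card := by
  calc _ ≤ c₀.support.card + ((c₁ - c₀).mapDomain (S ∪ ·)).support.card :=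
        (card_le_card Finsupp.support_add).trans (card_union_le c₀.support _)
    _ ≤ c₀.support.card + (c₁ - c₀).support.card :=
        Nat.add_le_add_left (Finsupp.card_support_mapDomain_le _ _) _
    _ ≤ c₀.support.card + (c₁.support.card + c₀.support.card) := by
        gcongr
        exact (card_le_card Finsupp.support_sub).trans (card_union_le c₁.support _)
    _ = _ := by ring

theorem QTree.exists_andMonomial_repr (t : QTree E) :
    ∃ c : Finset E →₀ ℝ,
      Finsupp.linearCombination ℝ andMonomial c = (fun x => if t.andEval x then 1 else 0) ∧
        c.support.card ≤ 3 ^ t.depth := by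
  induction t with
  | leaf b =>
    refine ⟨Finsupp.single ∅ (if b then 1 else 0), ?_, ?_⟩
    · ext x
      cases b <;> simp [andMonomial, QTree.andEval]
    · simpa [QTree.depth] using card_le_card Finsupp.support_single_subset
  | node S t₀ t₁ ih₀ ih₁ =>
    obtain ⟨c₀, hc₀, hcard₀⟩ := ih₀
    obtain ⟨c₁, hc₁, hcard₁⟩ := ih₁
    refine ⟨c₀ + (c₁ - c₀).mapDomain (S ∪ ·), ?_, ?_⟩
    · ext x
      rw [map_add, linearCombination_andMonomial_mapDomain_union, map_sub, hc₀, hc₁]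
      by_cases hS : ∀ i ∈ S, x i = true
      · simp only [QTree.andEval, andMonomial_eq_ite, if_pos hS, Pi.add_apply, Pi.mul_apply,
          Pi.sub_apply, one_mul, add_sub_cancel]
      · simp only [QTree.andEval, andMonomial_eq_ite, if_neg hS, Pi.add_apply, Pi.mul_apply,
          zero_mul, add_zero]
    · have h₀ : 3 ^ t₀.depth ≤ 3 ^ max t₀.depth t₁.depth :=
        Nat.pow_le_pow_right (by norm_num) (le_max_left _ _)
      have h₁ : 3 ^ t₁.depth ≤ 3 ^ max t₀.depth t₁.depth :=
        Nat.pow_le_pow_right (by norm_num) (le_max_right _ _)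
      rw [QTree.depth, pow_succ]
      have := card_support_node_le S c₀ c₁
      omega

end

/-- for every Boolean function `f`, the depth of any AND decision tree
computing `f` is at least `log₃` of the number of monomials with nonzero coefficient in the
unique real multilinear polynomial representing `f`. -/
theorem stmt13 (n : ℕ) (f : (Fin n → Bool) → Bool)
    (a : Finset (Fin n) → ℝ)
    (ha : ∀ x : Fin n → Bool,
      (∑ S : Finset (Fin n), a S * ∏ i ∈ S, (if x i then (1 : ℝ) else 0))
        = (if f x then 1 else 0))
    (T : QTree (Fin n)) (hT : ∀ x, T.andEval x = f x) :
    Real.logb 3 ((Finset.univ.filter fun S : Finset (Fin n) => a S ≠ 0).card) ≤ T.depth := by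
  obtain ⟨c, hc, hcard⟩ := T.exists_andMonomial_repr
  have hac : Finsupp.equivFunOnFinite.symm a = c := by
    refine linearIndependent_andMonomial.finsuppLinearCombination_injective ?_
    rw [hc]
    ext x
    rw [Finsupp.linearCombination_apply, Finsupp.sum_fintype _ _ (by simp)]
    simpa [hT, andMonomial] using ha x
  have hsupport : (univ.filter fun S => a S ≠ 0) = c.support := by
    rw [← hac]
    ext S
    simp
  rw [hsupport]
  exact Real.logb_natCast_le_of_le_pow (by norm_num) (by exact_mod_cast hcard)
end
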